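/- arXiv:2409.04549 — 11 statements merged into one kernel-verified Lean document; each statement's English description precedes it below -/
import Mathlib

section
/- Let F be a finite field with exactly q elements and let n, s be natural numbers with s+1 ≤ n ≤ char(F). Then for every finite set T of right vertices of the KT graph, the inequality 2q·|Γ_R(T)| ≥ 2q·q^{n−(s+1)}·|T| − (q−1)·q^{max(n−(2s+2), 0)}·|T|² holds (as an inequality of integers). In particular, for 0 < δ < 1, every set T of right vertices of size at most δ·q^{s+1} satisfies |Γ_R(T)| ≥ (1 − ε)·q^{n−(s+1)}·|T| with ε = (δ·(q−1)/(2q))·q^{max(2s+2−n, 0)}. -/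
/-!
A right vertex `(y, z)` prescribes the first `s + 1` Taylor coefficients at `y` (the factorials
`j!`, `j ≤ s`, are invertible because `s < char F`), so its neighbourhood is a coset of
`(X - y)^(s+1) · F[X]_{< n-s-1}` and has `q^(n-s-1)` elements. Right vertices with the same `y`
have disjoint neighbourhoods; for distinct `y ≠ y'` the common neighbours differ by multiples
of `(X - y)^(s+1) (X - y')^(s+1)`, so there are at most `q^(n-2s-2)` of them. The second
Bonferroni inequality `|⋃ N_w| ≥ ∑ |N_w| - ∑_{w < w'} |N_w ∩ N_w'|`, together with the
Cauchy–Schwarz bound that at most a `(1 - 1/q)` fraction of the ordered pairs in `T × T` have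
distinct first coordinates, gives the estimate.
-/

open Polynomial

/-- The adjacency relation of the KT graph. -/
def KTAdj {F : Type*} [Field F] (s : ℕ) (f : F[X]) (w : F × (Fin (s + 1) → F)) : Prop :=
  ∀ j : Fin (s + 1), (Polynomial.derivative^[(j : ℕ)] f).eval w.1 = w.2 j

open Finset
open scoped Nat

namespace Polynomial

theorem iterate_derivative_eval_eq_factorial_mul_taylor_coeff {R : Type*} [CommSemiring R]
    (f : R[X]) (y : R) (j : ℕ) :
    (derivative^[j] f).eval y = j ! * (taylor y f).coeff j := by
  rw [taylor_coeff, ← factorial_smul_hasseDeriv]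
  simp [nsmul_eq_mul]

theorem pow_X_sub_C_dvd_iff_iterate_derivative_eval_eq_zero {R : Type*} [CommRing R] {s : ℕ}
    (hs : (s ! : R) ∈ nonZeroDivisors R) (p : R[X]) (y : R) :
    (X - C y) ^ (s + 1) ∣ p ↔ ∀ j ≤ s, (derivative^[j] p).eval y = 0 := by
  rcases eq_or_ne p 0 with rfl | hp
  · simp
  · rw [← le_rootMultiplicity_iff hp, Nat.succ_le_iff,
      lt_rootMultiplicity_iff_isRoot_iterate_derivative_of_mem_nonZeroDivisors hp hs]
    rfl

/-- For `natDegree D > n` the truncated subtraction gives `0`, and both sides say `h = 0`. -/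
theorem Monic.degree_mul_lt_iff {R : Type*} [Semiring R] {D h : R[X]} (hD : D.Monic)
    (n : ℕ) : (D * h).degree < n ↔ h.degree < ↑(n - D.natDegree) := by
  rcases eq_or_ne h 0 with rfl | hh
  · simp
  · rw [← natDegree_lt_iff_degree_lt (hD.mul_right_ne_zero hh),
      ← natDegree_lt_iff_degree_lt hh, hD.natDegree_mul' hh]
    omega

end Polynomial

theorem ncard_setOf_degree_lt {R : Type*} [Semiring R] [Fintype R] (m : ℕ) :
    {f : R[X] | f.degree < m}.ncard = Fintype.card R ^ m := by
  have : {f : R[X] | f.degree < m} = degreeLT R m := by ext; simp [mem_degreeLT]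
  rw [this, ← Nat.card_coe_set_eq, SetLike.coe_sort_coe,
    Nat.card_congr (degreeLTEquiv R m).toEquiv, Nat.card_fun, Nat.card_fin,
    Nat.card_eq_fintype_card]

theorem ncard_setOf_degree_lt_dvd_sub {R : Type*} [Ring R] [Fintype R] {D f₀ : R[X]}
    (hD : D.Monic) {n : ℕ} (hf₀ : f₀.degree < n) :
    {f : R[X] | f.degree < n ∧ D ∣ f - f₀}.ncard = Fintype.card R ^ (n - D.natDegree) := by
  have : {f : R[X] | f.degree < n ∧ D ∣ f - f₀} =
      (f₀ + D * ·) '' {h : R[X] | h.degree < ↑(n - D.natDegree)} := by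
    ext f
    constructor
    · rintro ⟨hf, h, hh⟩
      refine ⟨h, ?_, by simp [← hh]⟩
      rw [Set.mem_ofPred_eq, ← hD.degree_mul_lt_iff, ← hh]
      exact (degree_sub_le f f₀).trans_lt (max_lt hf hf₀)
    · rintro ⟨h, hh, rfl⟩
      exact ⟨(degree_add_le _ _).trans_lt (max_lt hf₀ ((hD.degree_mul_lt_iff n).2 hh)),
        h, by simp⟩
  rw [this, Set.ncard_image_of_injective _ fun _ _ h => hD.isRegular.left (add_left_cancel h),
    ncard_setOf_degree_lt]

section DoubleCounting

variable {ι α : Type*}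

theorem Finset.bonferroni_card_biUnion [DecidableEq ι] [DecidableEq α] (T : Finset ι)
    (N : ι → Finset α) :
    2 * ∑ i ∈ T, #(N i) ≤ 2 * #(T.biUnion N) + ∑ p ∈ T.offDiag, #(N p.1 ∩ N p.2) := by
  set U := T.biUnion N
  set d : α → Finset ι := fun a => {i ∈ T | a ∈ N i}
  have hsum : ∑ i ∈ T, #(N i) = ∑ a ∈ U, #(d a) := by
    simp only [card_eq_sum_ones]
    exact sum_comm' fun i a => by simp [U, d]; tauto
  have hpairs : ∑ p ∈ T.offDiag, #(N p.1 ∩ N p.2) = ∑ a ∈ U, #(d a).offDiag := by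
    simp only [card_eq_sum_ones]
    exact sum_comm' fun p a => by simp [U, d]; tauto
  have hpoint : ∀ k : ℕ, 2 * k ≤ 2 + (k * k - k) := by
    intro k
    have := Nat.le_mul_self k
    zify [this]
    nlinarith
  rw [hsum, hpairs, mul_sum, card_eq_sum_ones U, mul_sum, ← sum_add_distrib]
  exact sum_le_sum fun a _ => by rw [offDiag_card, mul_one]; exact hpoint _

theorem Set.bonferroni_ncard_biUnion [DecidableEq ι] (T : Finset ι) {N : ι → Set α}
    (hN : ∀ i, (N i).Finite) :
    2 * ∑ i ∈ T, (N i).ncard ≤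
      2 * (⋃ i ∈ T, N i).ncard + ∑ p ∈ T.offDiag, (N p.1 ∩ N p.2).ncard := by
  classical
  choose M hM using fun i => (hN i).exists_finset_coe
  obtain rfl : N = fun i => ↑(M i) := funext fun i => (hM i).symm
  have hU : (⋃ i ∈ T, (M i : Set α)) = ↑(T.biUnion M) := by ext; simp
  simp only [hU, ← Finset.coe_inter, Set.ncard_coe_finset]
  exact T.bonferroni_card_biUnion M

theorem Finset.sq_card_le_card_mul_card_filter_eq {κ : Type*} [Fintype κ] [DecidableEq κ]
    (T : Finset ι) (g : ι → κ) :
    #T ^ 2 ≤ Fintype.card κ * #{p ∈ T ×ˢ T | g p.1 = g p.2} := by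
  set fiber : κ → Finset ι := fun y => {i ∈ T | g i = y}
  have hT : #T = ∑ y, #(fiber y) := (card_eq_sum_card_fiberwise fun i _ => mem_univ (g i))
  have hpairs : #{p ∈ T ×ˢ T | g p.1 = g p.2} = ∑ y, #(fiber y) ^ 2 := by
    rw [card_eq_sum_card_fiberwise (f := fun p => g p.1) fun p _ => mem_univ _]
    refine sum_congr rfl fun y _ => ?_
    rw [sq, ← card_product, filter_filter]
    congr 1
    ext ⟨a, b⟩
    simp only [mem_filter, mem_product, fiber]
    constructor
    · rintro ⟨⟨ha, hb⟩, hab, rfl⟩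
      exact ⟨⟨ha, rfl⟩, hb, hab.symm⟩
    · rintro ⟨⟨ha, rfl⟩, hb, hab⟩
      exact ⟨⟨ha, hb⟩, hab.symm, rfl⟩
  rw [hT, hpairs]
  exact sq_sum_le_card_mul_sum_sq

end DoubleCounting

theorem le_of_two_mul_sub_mul_sq_le {q t G δ : ℝ} {a b c e : ℕ} (hq : 1 ≤ q) (ht : 0 ≤ t)
    (htδ : t ≤ δ * q ^ c) (habce : a + c = b + e)
    (h : 2 * q * q ^ e * t - (q - 1) * q ^ a * t ^ 2 ≤ 2 * q * G) :
    (1 - δ * (q - 1) / (2 * q) * q ^ b) * q ^ e * t ≤ G := by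
  have hq0 : 0 < q := by linarith
  have hquad : (q - 1) * q ^ a * t ^ 2 ≤ δ * (q - 1) * q ^ b * q ^ e * t :=
    calc (q - 1) * q ^ a * t ^ 2 = (q - 1) * q ^ a * t * t := by ring
      _ ≤ (q - 1) * q ^ a * t * (δ * q ^ c) :=
          mul_le_mul_of_nonneg_left htδ (mul_nonneg (mul_nonneg (by linarith) (by positivity)) ht)
      _ = δ * (q - 1) * q ^ (a + c) * t := by ring
      _ = δ * (q - 1) * q ^ b * q ^ e * t := by rw [habce, pow_add]; ring
  rw [← mul_le_mul_iff_of_pos_left (by positivity : 0 < 2 * q)]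
  have hexpand : 2 * q * ((1 - δ * (q - 1) / (2 * q) * q ^ b) * q ^ e * t)
      = 2 * q * q ^ e * t - δ * (q - 1) * q ^ b * q ^ e * t := by
    field_simp
  linarith

theorem natCast_factorial_ne_zero_of_lt_ringChar {F : Type*} [Field F] [Finite F] {m : ℕ}
    (hm : m < ringChar F) : (m ! : F) ≠ 0 :=
  haveI : Fact (ringChar F).Prime := ⟨CharP.char_is_prime F _⟩
  ((IsUnit.natCast_factorial_iff_of_charP (ringChar F)).2 hm).ne_zero

section KTGraph

variable {F : Type*} [Field F] {n s : ℕ}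

def ktNeighbors (n s : ℕ) (w : F × (Fin (s + 1) → F)) : Set F[X] :=
  {f | f.degree < n ∧ KTAdj s f w}

theorem ktAdj_iff_dvd_sub (hs : (s ! : F) ≠ 0) {f₀ f : F[X]} {w : F × (Fin (s + 1) → F)}
    (h₀ : KTAdj s f₀ w) : KTAdj s f w ↔ (X - C w.1) ^ (s + 1) ∣ f - f₀ := by
  rw [pow_X_sub_C_dvd_iff_iterate_derivative_eval_eq_zero (mem_nonZeroDivisors_of_ne_zero hs)]
  simp only [iterate_derivative_sub, eval_sub, sub_eq_zero]
  constructor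
  · intro h j hj
    rw [h ⟨j, by omega⟩, h₀ ⟨j, by omega⟩]
  · intro h j
    rw [h j (by omega), h₀ j]

theorem exists_ktAdj (hs : (s ! : F) ≠ 0) (w : F × (Fin (s + 1) → F)) :
    ∃ f : F[X], f.degree < ↑(s + 1) ∧ KTAdj s f w := by
  obtain ⟨y, z⟩ := w
  let p := (degreeLTEquiv F (s + 1)).symm fun j => z j / (j : ℕ)!
  refine ⟨taylor (-y) p, by rw [degree_taylor]; exact mem_degreeLT.1 p.2, fun j => ?_⟩
  have hp : (p : F[X]).coeff j = z j / (j : ℕ)! :=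
    congrFun ((degreeLTEquiv F (s + 1)).apply_symm_apply _) j
  have hj : ((j : ℕ)! : F) ≠ 0 :=
    ((isUnit_iff_ne_zero.2 hs).natCast_factorial_of_le (Nat.lt_succ_iff.1 j.2)).ne_zero
  rw [iterate_derivative_eval_eq_factorial_mul_taylor_coeff, taylor_taylor, add_neg_cancel,
    taylor_zero, hp, mul_div_cancel₀ _ hj]

theorem ktNeighbors_eq_setOf_dvd_sub (hs : (s ! : F) ≠ 0) {f₀ : F[X]}
    {w : F × (Fin (s + 1) → F)} (h₀ : KTAdj s f₀ w) :
    ktNeighbors n s w = {f | f.degree < ↑n ∧ (X - C w.1) ^ (s + 1) ∣ f - f₀} := by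
  ext f
  simp only [ktNeighbors, Set.mem_ofPred_eq, ktAdj_iff_dvd_sub hs h₀]

theorem ncard_ktNeighbors [Fintype F] (hs : (s ! : F) ≠ 0) (hsn : s + 1 ≤ n)
    (w : F × (Fin (s + 1) → F)) :
    (ktNeighbors n s w).ncard = Fintype.card F ^ (n - (s + 1)) := by
  obtain ⟨f₀, hdeg, h₀⟩ := exists_ktAdj hs w
  rw [ktNeighbors_eq_setOf_dvd_sub hs h₀, ncard_setOf_degree_lt_dvd_sub ((monic_X_sub_C _).pow _)
    (hdeg.trans_le (by exact_mod_cast hsn))]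
  simp

theorem ktNeighbors_disjoint {w w' : F × (Fin (s + 1) → F)} (hy : w.1 = w'.1) (hne : w ≠ w') :
    Disjoint (ktNeighbors n s w) (ktNeighbors n s w') :=
  Set.disjoint_left.2 fun _ ⟨_, h⟩ ⟨_, h'⟩ =>
    hne (Prod.ext hy (funext fun j => by rw [← h j, hy, h' j]))

theorem ncard_ktNeighbors_inter_le [Fintype F] (hs : (s ! : F) ≠ 0)
    {w w' : F × (Fin (s + 1) → F)} (hy : w.1 ≠ w'.1) :
    (ktNeighbors n s w ∩ ktNeighbors n s w').ncard ≤ Fintype.card F ^ (n - (2 * s + 2)) := by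
  rcases (ktNeighbors n s w ∩ ktNeighbors n s w').eq_empty_or_nonempty
    with h | ⟨f₀, ⟨hf₀, h₀⟩, -, h₀'⟩
  · simp [h]
  set D := (X - C w.1) ^ (s + 1) * (X - C w'.1) ^ (s + 1)
  have hD : D.Monic := ((monic_X_sub_C _).pow _).mul ((monic_X_sub_C _).pow _)
  have hcount := ncard_setOf_degree_lt_dvd_sub hD hf₀
  have hsub :
      ktNeighbors n s w ∩ ktNeighbors n s w' ⊆ {f | f.degree < n ∧ D ∣ f - f₀} := by
    rintro f ⟨⟨hf, h⟩, -, h'⟩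
    exact ⟨hf, (isCoprime_X_sub_C_of_isUnit_sub (sub_ne_zero.2 hy).isUnit).pow.mul_dvd
      ((ktAdj_iff_dvd_sub hs h₀).1 h) ((ktAdj_iff_dvd_sub hs h₀').1 h')⟩
  calc _ ≤ _ := Set.ncard_le_ncard hsub (Set.finite_of_ncard_ne_zero (by simp [hcount]))
    _ = _ := by
      rw [hcount, show D.natDegree = 2 * s + 2 by
        simp [D, natDegree_mul, X_sub_C_ne_zero]; ring]

theorem sum_offDiag_ncard_ktNeighbors_inter_le [Fintype F] [DecidableEq F] (hs : (s ! : F) ≠ 0)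
    (T : Finset (F × (Fin (s + 1) → F))) :
    ∑ p ∈ T.offDiag, (ktNeighbors n s p.1 ∩ ktNeighbors n s p.2).ncard
      ≤ Fintype.card F ^ (n - (2 * s + 2)) * #{p ∈ T ×ˢ T | p.1.1 ≠ p.2.1} := by
  calc _ ≤ ∑ p ∈ T.offDiag,
          if p.1.1 ≠ p.2.1 then Fintype.card F ^ (n - (2 * s + 2)) else 0 := by
        refine sum_le_sum fun p hp => ?_
        split_ifs with hy
        · exact ncard_ktNeighbors_inter_le hs hy
        · rw [(ktNeighbors_disjoint (not_not.1 hy) (mem_offDiag.1 hp).2.2).inter_eq,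
            Set.ncard_empty]
    _ ≤ ∑ p ∈ T ×ˢ T, if p.1.1 ≠ p.2.1 then Fintype.card F ^ (n - (2 * s + 2)) else 0 :=
        sum_le_sum_of_subset_of_nonneg
          (fun p hp => mem_product.2 ⟨(mem_offDiag.1 hp).1, (mem_offDiag.1 hp).2.1⟩)
          fun _ _ _ => Nat.zero_le _
    _ = _ := by rw [← sum_filter, sum_const, smul_eq_mul, mul_comm]

theorem ktNeighbors_expansion [Fintype F] {q : ℕ} (hq : Fintype.card F = q)
    (hs : (s ! : F) ≠ 0) (hsn : s + 1 ≤ n) (T : Set (F × (Fin (s + 1) → F))) :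
    2 * (q : ℤ) * (q : ℤ) ^ (n - (s + 1)) * T.ncard
        - ((q : ℤ) - 1) * (q : ℤ) ^ (n - (2 * s + 2)) * T.ncard ^ 2
      ≤ 2 * (q : ℤ) * (⋃ w ∈ T, ktNeighbors n s w).ncard := by
  classical
  subst hq
  obtain ⟨T, rfl⟩ := T.toFinite.exists_finset_coe
  simp only [Finset.mem_coe, Set.ncard_coe_finset]
  have hbonf := Set.bonferroni_ncard_biUnion T fun w => Set.finite_of_ncard_ne_zero
    (by rw [ncard_ktNeighbors hs hsn]; positivity : (ktNeighbors n s w).ncard ≠ 0)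
  have hsum : ∑ w ∈ T, (ktNeighbors n s w).ncard = #T * Fintype.card F ^ (n - (s + 1)) := by
    simp [ncard_ktNeighbors hs hsn]
  have hpairs := sum_offDiag_ncard_ktNeighbors_inter_le (n := n) hs T
  have hcoll := T.sq_card_le_card_mul_card_filter_eq Prod.fst
  have hsplit := card_filter_add_card_filter_not (s := T ×ˢ T) fun p => p.1.1 = p.2.1
  rw [card_product, ← sq] at hsplit
  rw [hsum] at hbonf
  zify at hbonf hpairs hcoll hsplit
  have hcollP : (Fintype.card F : ℤ) * #{p ∈ T ×ˢ T | p.1.1 ≠ p.2.1}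
      ≤ ((Fintype.card F : ℤ) - 1) * #T ^ 2 := by
    linear_combination (Fintype.card F : ℤ) * hsplit + hcoll
  have hpow : (0 : ℤ) ≤ (Fintype.card F : ℤ) ^ (n - (2 * s + 2)) := by positivity
  nlinarith [mul_le_mul_of_nonneg_left hcollP hpow]

end KTGraph

/-- Right-to-left lossless expansion of the KT graph. -/
theorem stmt_1 {F : Type*} [Field F] [Fintype F] (q n s : ℕ)
    (hq : Fintype.card F = q) (hsn : s + 1 ≤ n) (hchar : n ≤ ringChar F) :
    (∀ T : Set (F × (Fin (s + 1) → F)),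
      2 * (q : ℤ) * (q : ℤ) ^ (n - (s + 1)) * (T.ncard : ℤ) -
          ((q : ℤ) - 1) * (q : ℤ) ^ (max (n - (2 * s + 2)) 0) * (T.ncard : ℤ) ^ 2 ≤
        2 * (q : ℤ) * (Set.ncard {f : F[X] | f.degree < n ∧ ∃ w ∈ T, KTAdj s f w} : ℤ)) ∧
    (∀ δ : ℝ, 0 < δ → δ < 1 →
      ∀ T : Set (F × (Fin (s + 1) → F)), (T.ncard : ℝ) ≤ δ * (q : ℝ) ^ (s + 1) →
        (1 - (δ * ((q : ℝ) - 1) / (2 * (q : ℝ))) * (q : ℝ) ^ (max (2 * s + 2 - n) 0)) *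
            (q : ℝ) ^ (n - (s + 1)) * (T.ncard : ℝ) ≤
          (Set.ncard {f : F[X] | f.degree < n ∧ ∃ w ∈ T, KTAdj s f w} : ℝ)) := by
  have hΓ : ∀ T : Set (F × (Fin (s + 1) → F)),
      {f : F[X] | f.degree < n ∧ ∃ w ∈ T, KTAdj s f w} = ⋃ w ∈ T, ktNeighbors n s w := by
    intro T
    ext f
    simp [ktNeighbors]
  simp only [hΓ, Nat.max_zero]
  have hexp := ktNeighbors_expansion hq (natCast_factorial_ne_zero_of_lt_ringChar (by omega)) hsn
  refine ⟨hexp, fun δ _ _ T hT => ?_⟩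
  have hq1 : (1 : ℝ) ≤ q := by exact_mod_cast hq ▸ Fintype.card_pos
  refine le_of_two_mul_sub_mul_sq_le hq1 (Nat.cast_nonneg _) hT ?_ (by exact_mod_cast hexp T)
  omega
end

section
/- Let F be a finite field with exactly q elements and let n, s be natural numbers with s+1 ≤ n ≤ char(F). Then the KT graph is right-regular with right degree q^{n−(s+1)}: for every y ∈ F and every z : Fin (s+1) → F, the number of polynomials f ∈ F[X] with deg f < n satisfying f^{(j)}(y) = z j for all 0 ≤ j ≤ s is exactly q^{n−(s+1)}. -/
open Polynomial

/-! Since `f⁽ʲ⁾(y) = j! · (taylor y f)ⱼ` and `j!` is invertible for `j < char F`, the conditions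
prescribe the first `s + 1` coefficients of the Taylor expansion of `f` at `y`. Taylor expansion
is a degree-preserving bijection, and the polynomials of degree `< n` with prescribed coefficients
below `k` are exactly `p + X ^ k * h` with `deg h < n - k`. -/

namespace Polynomial

theorem eval_iterate_derivative_eq_factorial_mul_coeff_taylor {R : Type*} [CommSemiring R]
    (f : R[X]) (r : R) (j : ℕ) :
    (derivative^[j] f).eval r = j.factorial * (taylor r f).coeff j := by
  rw [taylor_coeff, ← factorial_smul_hasseDeriv]
  simp [nsmul_eq_mul]

variable {R : Type*} [CommRing R]

theorem image_add_X_pow_mul_setOf_degree_lt {p : R[X]} {k n : ℕ} (hp : p.degree < k)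
    (hkn : k ≤ n) :
    (fun h => p + X ^ k * h) '' {h : R[X] | h.degree < (n - k : ℕ)} =
      {g : R[X] | g.degree < n ∧ ∀ j : Fin k, g.coeff j = p.coeff j} := by
  have hp_coeff : ∀ i, k ≤ i → p.coeff i = 0 := fun i hi =>
    (degree_lt_iff_coeff_zero p k).1 hp i hi
  ext g
  simp only [Set.mem_image, Set.mem_ofPred_eq, degree_lt_iff_coeff_zero]
  constructor
  · rintro ⟨h, hh, rfl⟩
    refine ⟨fun i hi => ?_, fun j => ?_⟩
    · rw [coeff_add, coeff_X_pow_mul', hp_coeff i (hkn.trans hi), if_pos (hkn.trans hi),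
        hh _ (by omega), add_zero]
    · rw [coeff_add, coeff_X_pow_mul', if_neg (by omega), add_zero]
  · rintro ⟨hg, hcoeff⟩
    obtain ⟨h, hgh⟩ : X ^ k ∣ g - p :=
      X_pow_dvd_iff.2 fun i hi => by rw [coeff_sub, hcoeff ⟨i, hi⟩, sub_self]
    refine ⟨h, fun i hi => ?_, by rw [← hgh, add_sub_cancel]⟩
    rw [← coeff_X_pow_mul, ← hgh, coeff_sub, hg _ (by omega), hp_coeff _ (by omega), sub_zero]

variable [Fintype R]

theorem ncard_setOf_degree_lt (m : ℕ) :
    {h : R[X] | h.degree < m}.ncard = Fintype.card R ^ m := by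
  have : {h : R[X] | h.degree < m} = degreeLT R m := by ext; simp [mem_degreeLT]
  rw [this, ← Nat.card_coe_set_eq, SetLike.coe_sort_coe,
    Nat.card_congr (degreeLTEquiv R m).toEquiv, Nat.card_eq_fintype_card, Fintype.card_fun,
    Fintype.card_fin]

theorem ncard_setOf_degree_lt_coeff_eq {k n : ℕ} (hkn : k ≤ n) (w : Fin k → R) :
    {g : R[X] | g.degree < n ∧ ∀ j : Fin k, g.coeff j = w j}.ncard =
      Fintype.card R ^ (n - k) := by
  set p : degreeLT R k := (degreeLTEquiv R k).symm w
  have hw : ∀ j : Fin k, w j = (p : R[X]).coeff j := fun j =>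
    (congrFun ((degreeLTEquiv R k).apply_symm_apply w) j).symm
  have hinj : Function.Injective fun h : R[X] => (p : R[X]) + X ^ k * h :=
    fun _ _ h => (isRegular_X_pow k).left (add_left_cancel h)
  simp only [hw]
  rw [← image_add_X_pow_mul_setOf_degree_lt (mem_degreeLT.1 p.2) hkn,
    Set.ncard_image_of_injective _ hinj, ncard_setOf_degree_lt]

end Polynomial

theorem Nat.cast_factorial_ne_zero_of_lt_ringChar {R : Type*} [Ring R] [NoZeroDivisors R]
    [Nontrivial R] {k : ℕ} (hk : k < ringChar R) : (k.factorial : R) ≠ 0 := by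
  rw [ne_eq, CharP.cast_eq_zero_iff R (ringChar R)]
  rcases CharP.char_is_prime_or_zero R (ringChar R) with hp | hp
  · exact fun h => absurd ((hp.dvd_factorial).1 h) (by omega)
  · omega

/-- The KT graph is right-regular with right degree `q ^ (n - (s + 1))`. -/
theorem stmt_2 {F : Type*} [Field F] [Fintype F] (q n s : ℕ)
    (hq : Fintype.card F = q) (hsn : s + 1 ≤ n) (hchar : n ≤ ringChar F)
    (y : F) (z : Fin (s + 1) → F) :
    Set.ncard {f : F[X] | f.degree < n ∧
        ∀ j : Fin (s + 1), (Polynomial.derivative^[(j : ℕ)] f).eval y = z j} =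
      q ^ (n - (s + 1)) := by
  have hfac (j : Fin (s + 1)) : ((j : ℕ).factorial : F) ≠ 0 :=
    Nat.cast_factorial_ne_zero_of_lt_ringChar (by omega)
  have hset : {f : F[X] | f.degree < n ∧
        ∀ j : Fin (s + 1), (derivative^[(j : ℕ)] f).eval y = z j} =
      taylor y ⁻¹' {g | g.degree < n ∧
        ∀ j : Fin (s + 1), g.coeff j = z j / (j : ℕ).factorial} := by
    ext f
    simp only [Set.mem_ofPred_eq, Set.mem_preimage, degree_taylor,
      eval_iterate_derivative_eq_factorial_mul_coeff_taylor, eq_div_iff (hfac _), mul_comm]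
  rw [hset, Set.ncard_preimage_of_injective_subset_range (taylor_injective y)
    fun g _ => ⟨taylor (-y) g, by simp [taylor_taylor]⟩, ncard_setOf_degree_lt_coeff_eq hsn, hq]
end

section
/- Let F be a finite field with exactly q elements and let n, s be natural numbers with s+1 ≤ n ≤ char(F). Let y1, y2 ∈ F with y1 ≠ y2 and let z1, z2 : Fin (s+1) → F. Let N be the number of polynomials f ∈ F[X] with deg f < n satisfying f^{(j)}(y1) = z1 j and f^{(j)}(y2) = z2 j for all 0 ≤ j ≤ s (i.e., the number of common left neighbors of the right vertices (y1, z1) and (y2, z2) in the KT graph). If n ≥ 2s+2, then N = q^{n−(2s+2)}; if n ≤ 2s+2, then N ≤ 1. -/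
open Polynomial

lemma kt_dvd_imp_zero {F : Type*} [Field F] {s : ℕ} {y : F} {f : F[X]}
    (hdvd : (X - C y) ^ (s + 1) ∣ f) {j : ℕ} (hj : j ≤ s) :
    (derivative^[j] f).eval y = 0 := by
  have h1 : (X - C y) ^ (s + 1 - j) ∣ derivative^[j] f :=
    pow_sub_dvd_iterate_derivative_of_pow_dvd j hdvd
  have h2 : (X - C y) ∣ derivative^[j] f :=
    (dvd_pow_self _ (by omega : s + 1 - j ≠ 0)).trans h1
  exact dvd_iff_isRoot.mp h2

lemma kt_zero_imp_dvd {F : Type*} [Field F] {s : ℕ} {y : F} {f : F[X]}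
    (hfac : ((s.factorial : F)) ≠ 0)
    (hz : ∀ j ≤ s, (derivative^[j] f).eval y = 0) :
    (X - C y) ^ (s + 1) ∣ f := by
  rcases eq_or_ne f 0 with rfl | hf
  · exact dvd_zero _
  · have hlt : s < f.rootMultiplicity y :=
      lt_rootMultiplicity_of_isRoot_iterate_derivative_of_mem_nonZeroDivisors hf
        (fun m hm => hz m hm) (mem_nonZeroDivisors_of_ne_zero hfac)
    exact (pow_dvd_pow _ hlt).trans (f.pow_rootMultiplicity_dvd y)

lemma kt_fac_ne_zero {F : Type*} [Field F] [Fintype F] {s : ℕ} (hs : s < ringChar F) :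
    ((s.factorial : F)) ≠ 0 := by
  have hp : (ringChar F).Prime := CharP.char_is_prime F (ringChar F)
  intro h0
  have := (ringChar.spec F s.factorial).mp h0
  exact absurd (hp.dvd_factorial.mp this) (by omega)


lemma kt_iter_deriv_add {R : Type*} [CommSemiring R] (k : ℕ) (f g : R[X]) :
    derivative^[k] (f + g) = derivative^[k] f + derivative^[k] g := by
  induction k with
  | zero => rfl
  | succ k ih =>
    rw [Function.iterate_succ_apply', Function.iterate_succ_apply',
      Function.iterate_succ_apply', ih, derivative_add]

/-- The number of common left neighbors of two right vertices of the KT graph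
coming from different seeds. -/
theorem stmt_3 {F : Type*} [Field F] [Fintype F] (q n s : ℕ)
    (hq : Fintype.card F = q) (hsn : s + 1 ≤ n) (hchar : n ≤ ringChar F)
    (y1 y2 : F) (hy : y1 ≠ y2) (z1 z2 : Fin (s + 1) → F)
    (N : ℕ)
    (hN : N = Set.ncard {f : F[X] | f.degree < n ∧
        (∀ j : Fin (s + 1), (Polynomial.derivative^[(j : ℕ)] f).eval y1 = z1 j) ∧
        (∀ j : Fin (s + 1), (Polynomial.derivative^[(j : ℕ)] f).eval y2 = z2 j)}) :
    (2 * s + 2 ≤ n → N = q ^ (n - (2 * s + 2))) ∧ (n ≤ 2 * s + 2 → N ≤ 1) := by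
  set S : Set F[X] := {f : F[X] | f.degree < n ∧
        (∀ j : Fin (s + 1), (Polynomial.derivative^[(j : ℕ)] f).eval y1 = z1 j) ∧
        (∀ j : Fin (s + 1), (Polynomial.derivative^[(j : ℕ)] f).eval y2 = z2 j)} with hS
  set d : ℕ := 2 * s + 2 with hd
  set h : F[X] := (X - C y1) ^ (s + 1) * (X - C y2) ^ (s + 1) with hh
  have hfac : ((s.factorial : F)) ≠ 0 := kt_fac_ne_zero (by omega)
  have hmonic : h.Monic := ((monic_X_sub_C y1).pow _).mul ((monic_X_sub_C y2).pow _)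
  have hndeg : h.natDegree = d := by
    rw [hh, ((monic_X_sub_C y1).pow _).natDegree_mul ((monic_X_sub_C y2).pow _)]
    simp [natDegree_pow]
    ring
  have hdegh : h.degree = (d : WithBot ℕ) := by
    rw [degree_eq_natDegree hmonic.ne_zero, hndeg]
  -- coprimality
  have hcop : IsCoprime ((X - C y1) ^ (s + 1)) ((X - C y2) ^ (s + 1)) :=
    (isCoprime_X_sub_C_of_isUnit_sub ((sub_ne_zero.mpr hy).isUnit)).pow
  -- key divisibility characterization
  have key1 : ∀ f : F[X], (∀ j ≤ s, (derivative^[j] f).eval y1 = 0) →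
      (∀ j ≤ s, (derivative^[j] f).eval y2 = 0) → h ∣ f := by
    intro f h1 h2
    exact hcop.mul_dvd (kt_zero_imp_dvd hfac h1) (kt_zero_imp_dvd hfac h2)
  have key2 : ∀ f : F[X], h ∣ f → ∀ j ≤ s,
      (derivative^[j] f).eval y1 = 0 ∧ (derivative^[j] f).eval y2 = 0 := by
    intro f hf j hj
    exact ⟨kt_dvd_imp_zero ((dvd_mul_right _ _).trans hf) hj,
      kt_dvd_imp_zero ((dvd_mul_left _ _).trans hf) hj⟩
  constructor
  · -- case n ≥ 2s+2
    intro hdn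
    let T : F[X] →ₗ[F] ((Fin (s + 1) → F) × (Fin (s + 1) → F)) :=
      LinearMap.prod
        (LinearMap.pi fun j : Fin (s + 1) =>
          (leval y1).comp ((derivative : F[X] →ₗ[F] F[X]) ^ (j : ℕ)))
        (LinearMap.pi fun j : Fin (s + 1) =>
          (leval y2).comp ((derivative : F[X] →ₗ[F] F[X]) ^ (j : ℕ)))
    have hT : ∀ f : F[X], T f =
        (fun j : Fin (s + 1) => (derivative^[(j : ℕ)] f).eval y1,
         fun j : Fin (s + 1) => (derivative^[(j : ℕ)] f).eval y2) := by
      intro f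
      refine Prod.ext ?_ ?_ <;> funext j <;>
        simp [T, Module.End.pow_apply, leval_apply]
    let W := degreeLT F d
    let Tw : W →ₗ[F] ((Fin (s + 1) → F) × (Fin (s + 1) → F)) := T.comp W.subtype
    haveI : FiniteDimensional F W := (degreeLTEquiv F d).symm.finiteDimensional
    have hfW : Module.finrank F W = d := by
      rw [(degreeLTEquiv F d).finrank_eq]
      simp [Module.finrank_pi]
    have hfC : Module.finrank F ((Fin (s + 1) → F) × (Fin (s + 1) → F)) = d := by
      simp only [Module.finrank_prod, Module.finrank_pi, Fintype.card_fin]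
      omega
    have hinj : Function.Injective Tw := by
      rw [← LinearMap.ker_eq_bot, Submodule.eq_bot_iff]
      intro v hv
      have hv' : T (v : F[X]) = 0 := hv
      rw [hT] at hv'
      have h1 : ∀ j ≤ s, (derivative^[j] (v : F[X])).eval y1 = 0 := by
        intro j hj
        have := congrFun (congrArg Prod.fst hv') ⟨j, by omega⟩
        simpa using this
      have h2 : ∀ j ≤ s, (derivative^[j] (v : F[X])).eval y2 = 0 := by
        intro j hj
        have := congrFun (congrArg Prod.snd hv') ⟨j, by omega⟩
        simpa using this
      have hz : (v : F[X]) = 0 :=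
        eq_zero_of_dvd_of_degree_lt (key1 _ h1 h2) (by rw [hdegh]; exact mem_degreeLT.mp v.2)
      exact Subtype.ext hz
    have hsurj : Function.Surjective Tw :=
      (LinearMap.injective_iff_surjective_of_finrank_eq_finrank (by rw [hfW, hfC])).mp hinj
    obtain ⟨v, hv⟩ := hsurj (z1, z2)
    set f0 : F[X] := (v : F[X]) with hf0
    have hf0deg : f0.degree < (n : WithBot ℕ) :=
      lt_of_lt_of_le (mem_degreeLT.mp v.2) (Nat.cast_le.mpr hdn)
    have hv2 : T f0 = (z1, z2) := hv
    rw [hT] at hv2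
    have hf01 : ∀ j : Fin (s + 1), (derivative^[(j : ℕ)] f0).eval y1 = z1 j := fun j =>
      congrFun (congrArg Prod.fst hv2) j
    have hf02 : ∀ j : Fin (s + 1), (derivative^[(j : ℕ)] f0).eval y2 = z2 j := fun j =>
      congrFun (congrArg Prod.snd hv2) j
    -- the coset argument
    set K : Set F[X] := {g : F[X] | g.degree < (n : WithBot ℕ) ∧ h ∣ g} with hK
    have himg : (fun g => f0 + g) '' K = S := by
      ext f
      constructor
      · rintro ⟨g, ⟨hgdeg, hgdvd⟩, rfl⟩
        refine ⟨lt_of_le_of_lt (degree_add_le f0 g) (max_lt hf0deg hgdeg), ?_, ?_⟩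
        · intro j
          rw [kt_iter_deriv_add, eval_add, hf01 j, (key2 g hgdvd j (by omega)).1, add_zero]
        · intro j
          rw [kt_iter_deriv_add, eval_add, hf02 j, (key2 g hgdvd j (by omega)).2, add_zero]
      · intro hf
        refine ⟨f - f0, ⟨?_, ?_⟩, by ring⟩
        · exact lt_of_le_of_lt (degree_sub_le f f0) (max_lt hf.1 hf0deg)
        · refine key1 _ (fun j hj => ?_) (fun j hj => ?_)
          · rw [iterate_derivative_sub, eval_sub, hf.2.1 ⟨j, by omega⟩, hf01 ⟨j, by omega⟩,
              sub_self]
          · rw [iterate_derivative_sub, eval_sub, hf.2.2 ⟨j, by omega⟩, hf02 ⟨j, by omega⟩,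
              sub_self]
    have hcards : S.ncard = K.ncard := by
      rw [← himg, Set.ncard_image_of_injective _ (add_right_injective f0)]
    have himg2 : (fun g : F[X] => h * g) '' {g : F[X] | g.degree < ((n - d : ℕ) : WithBot ℕ)}
        = K := by
      ext f
      constructor
      · rintro ⟨g, hg, rfl⟩
        refine ⟨?_, dvd_mul_right h g⟩
        rcases eq_or_ne g 0 with rfl | hg0
        · simp only [mul_zero, degree_zero]
          exact WithBot.bot_lt_coe n
        · have hg' : g.natDegree < n - d := (natDegree_lt_iff_degree_lt hg0).mpr hg
          have hne : h * g ≠ 0 := mul_ne_zero hmonic.ne_zero hg0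
          rw [← natDegree_lt_iff_degree_lt hne, natDegree_mul hmonic.ne_zero hg0, hndeg]
          omega
      · rintro ⟨hfdeg, g, rfl⟩
        refine ⟨g, ?_, rfl⟩
        rcases eq_or_ne g 0 with rfl | hg0
        · simp only [Set.mem_setOf_eq, degree_zero]
          exact WithBot.bot_lt_coe (n - d)
        · have hne : h * g ≠ 0 := mul_ne_zero hmonic.ne_zero hg0
          rw [← natDegree_lt_iff_degree_lt hne, natDegree_mul hmonic.ne_zero hg0, hndeg] at hfdeg
          show g.degree < ((n - d : ℕ) : WithBot ℕ)
          rw [← natDegree_lt_iff_degree_lt hg0]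
          omega
    have hKcard : K.ncard = q ^ (n - d) := by
      rw [← himg2, Set.ncard_image_of_injective _ (mul_right_injective₀ hmonic.ne_zero)]
      have hpeq : (fun g : F[X] => g.degree < ((n - d : ℕ) : WithBot ℕ))
          = (fun g : F[X] => g ∈ degreeLT F (n - d)) := by
        funext g
        exact propext mem_degreeLT.symm
      rw [← Nat.card_coe_set_eq]
      refine Eq.trans (Nat.card_congr ((Equiv.subtypeEquivProp hpeq).trans
        (degreeLTEquiv F (n - d)).toEquiv)) ?_
      rw [Nat.card_eq_fintype_card]
      simp [Fintype.card_fun, hq]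
    rw [hN, hcards, hKcard]
  · -- case n ≤ 2s+2 : S is subsingleton
    intro hnd
    have hsub : S.Subsingleton := by
      intro f1 hf1 f2 hf2
      have hz1 : ∀ j ≤ s, (derivative^[j] (f1 - f2)).eval y1 = 0 := by
        intro j hj
        have := hf1.2.1 ⟨j, by omega⟩
        have := hf2.2.1 ⟨j, by omega⟩
        rw [iterate_derivative_sub, eval_sub]
        simp_all
      have hz2 : ∀ j ≤ s, (derivative^[j] (f1 - f2)).eval y2 = 0 := by
        intro j hj
        have := hf1.2.2 ⟨j, by omega⟩
        have := hf2.2.2 ⟨j, by omega⟩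
        rw [iterate_derivative_sub, eval_sub]
        simp_all
      have hdvd : h ∣ (f1 - f2) := key1 _ hz1 hz2
      have hlt : (f1 - f2).degree < h.degree := by
        rw [hdegh]
        refine lt_of_lt_of_le (lt_of_le_of_lt (degree_sub_le f1 f2) (max_lt hf1.1 hf2.1)) ?_
        exact_mod_cast Nat.cast_le.mpr hnd
      have := eq_zero_of_dvd_of_degree_lt hdvd hlt
      exact sub_eq_zero.mp this
    subst hN
    exact (Set.ncard_le_one hsub.finite).mpr fun a ha b hb => hsub ha hb
end

section
/- (Hermite interpolation) Let F be a field whose characteristic is zero or strictly greater than s, let k ≥ 1, let y : Fin k → F be injective, and let z : Fin k → Fin (s+1) → F. Then there exists a unique polynomial f ∈ F[X] with deg f < k·(s+1) such that f^{(j)}(y i) = z i j for every i ∈ Fin k and every j with 0 ≤ j ≤ s. -/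
open Polynomial

lemma aux_cast_ne_zero {F : Type*} [Field F] {s : ℕ}
    (hchar : ringChar F = 0 ∨ s < ringChar F) {m : ℕ} (hm : m ≤ s) (hm0 : m ≠ 0) :
    (m : F) ≠ 0 := by
  have hcp : CharP F (ringChar F) := ringChar.charP F
  intro h
  rw [CharP.cast_eq_zero_iff F (ringChar F) m] at h
  rcases hchar with h0 | hs
  · rw [h0, zero_dvd_iff] at h; exact hm0 h
  · exact absurd (Nat.le_of_dvd (Nat.pos_of_ne_zero hm0) h) (not_le.2 (lt_of_le_of_lt hm hs))

lemma aux_ker {F : Type*} [Field F] (s k : ℕ)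
    (hchar : ringChar F = 0 ∨ s < ringChar F)
    (y : Fin k → F) (hy : Function.Injective y) (f : F[X])
    (hdeg : f.degree < (k * (s + 1) : ℕ))
    (hz : ∀ (i : Fin k) (j : Fin (s + 1)),
      (Polynomial.derivative^[(j : ℕ)] f).eval (y i) = 0) :
    f = 0 := by
  by_contra hf
  have hdvd : ∀ i : Fin k, (X - C (y i)) ^ (s + 1) ∣ f := by
    intro i
    have hlt : s < f.rootMultiplicity (y i) := by
      apply lt_rootMultiplicity_of_isRoot_iterate_derivative_of_mem_nonZeroDivisors' hf
      · intro m hm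
        have := hz i ⟨m, Nat.lt_succ_of_le hm⟩
        simpa [Polynomial.IsRoot] using this
      · intro m hm hm0
        exact mem_nonZeroDivisors_of_ne_zero (aux_cast_ne_zero hchar hm hm0)
    exact dvd_trans (pow_dvd_pow _ hlt) (f.pow_rootMultiplicity_dvd (y i))
  have hprod : (∏ i : Fin k, (X - C (y i)) ^ (s + 1)) ∣ f :=
    Fintype.prod_dvd_of_coprime (fun i j hij => ((pairwise_coprime_X_sub_C hy) hij).pow) hdvd
  have hdegp : (∏ i : Fin k, (X - C (y i)) ^ (s + 1)).natDegree = k * (s + 1) := by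
    rw [Polynomial.natDegree_prod]
    · simp [Polynomial.natDegree_pow, mul_comm]
    · intro i _
      exact pow_ne_zero _ (Polynomial.X_sub_C_ne_zero (y i))
  have hle : k * (s + 1) ≤ f.natDegree := hdegp ▸ Polynomial.natDegree_le_of_dvd hprod hf
  have : f.natDegree < k * (s + 1) := (Polynomial.natDegree_lt_iff_degree_lt hf).2 hdeg
  omega

/-- Hermite interpolation: there is a unique polynomial of degree `< k * (s + 1)` whose
first `s` iterated derivatives at `k` distinct points take prescribed values. -/
theorem stmt_4 {F : Type*} [Field F] (s k : ℕ)
    (hchar : ringChar F = 0 ∨ s < ringChar F) (hk : 1 ≤ k)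
    (y : Fin k → F) (hy : Function.Injective y) (z : Fin k → Fin (s + 1) → F) :
    ∃! f : F[X], f.degree < (k * (s + 1) : ℕ) ∧
      ∀ (i : Fin k) (j : Fin (s + 1)),
        (Polynomial.derivative^[(j : ℕ)] f).eval (y i) = z i j := by
  set N := k * (s + 1) with hN
  -- the linear map
  let L : degreeLT F N →ₗ[F] (Fin k → Fin (s + 1) → F) :=
    LinearMap.pi fun i => LinearMap.pi fun j =>
      (Polynomial.leval (y i)).comp
        ((((Polynomial.derivative : F[X] →ₗ[F] F[X]) ^ (j : ℕ)) : F[X] →ₗ[F] F[X]).comp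
          (Submodule.subtype _))
  have hL : ∀ (f : degreeLT F N) (i : Fin k) (j : Fin (s + 1)),
      L f i j = (Polynomial.derivative^[(j : ℕ)] (f : F[X])).eval (y i) := by
    intro f i j
    simp [L, Module.End.pow_apply]
  have hinj : Function.Injective L := by
    rw [← LinearMap.ker_eq_bot, LinearMap.ker_eq_bot']
    intro f hf
    have : (f : F[X]) = 0 := by
      apply aux_ker s k hchar y hy _ (Polynomial.mem_degreeLT.1 f.2)
      intro i j
      rw [← hL f i j, hf]
      rfl
    exact Subtype.ext this
  have hdim : Module.finrank F (degreeLT F N) =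
      Module.finrank F (Fin k → Fin (s + 1) → F) := by
    rw [(Polynomial.degreeLTEquiv F N).finrank_eq]
    simp [hN, Module.finrank_pi_fintype, Finset.sum_const, mul_comm]
  haveI : FiniteDimensional F (degreeLT F N) :=
    LinearEquiv.finiteDimensional (Polynomial.degreeLTEquiv F N).symm
  have hsurj : Function.Surjective L :=
    (LinearMap.injective_iff_surjective_of_finrank_eq_finrank hdim).1 hinj
  obtain ⟨f, hf⟩ := hsurj z
  refine ⟨(f : F[X]), ⟨Polynomial.mem_degreeLT.1 f.2, fun i j => by rw [← hL f i j, hf]⟩, ?_⟩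
  rintro g ⟨hgdeg, hg⟩
  have hginj := hinj (a₁ := ⟨g, Polynomial.mem_degreeLT.2 hgdeg⟩) (a₂ := f)
  have : L ⟨g, Polynomial.mem_degreeLT.2 hgdeg⟩ = z := by
    funext i j
    rw [hL]
    exact hg i j
  have := hginj (by rw [this, hf])
  exact congrArg Subtype.val this
end

section
/- Let F be a finite field with exactly q elements and let n, s be natural numbers with 2s+2 ≤ n ≤ char(F). Then for all y1, y2 ∈ F with y1 ≠ y2, the map ψ_{y1,y2} is surjective: for all z1, z2 : Fin (s+1) → F there exists a polynomial f ∈ F[X] with deg f < n such that ψ_{y1}(f) = z1 and ψ_{y2}(f) = z2. -/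
open Polynomial

private lemma pow_dvd_of_derivs_eq_zero {F : Type*} [Field F] {s : ℕ}
    (hs : s < ringChar F) (hp : (ringChar F).Prime) (f : F[X]) (y : F)
    (h : ∀ j : Fin (s + 1), (Polynomial.derivative^[(j : ℕ)] f).eval y = 0) :
    (X - C y) ^ (s + 1) ∣ f := by
  have hX : (X : F[X]) ^ (s + 1) ∣ taylor y f := by
    rw [X_pow_dvd_iff]
    intro d hd
    have h0 := h ⟨d, hd⟩
    simp only [← Polynomial.factorial_smul_hasseDeriv] at h0
    rw [Polynomial.taylor_coeff]
    have h0' : ((d.factorial : F[X]) * hasseDeriv d f).eval y = 0 := by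
      rw [← nsmul_eq_mul]; simpa using h0
    rw [eval_mul, eval_natCast] at h0'
    have hne : ((d.factorial : ℕ) : F) ≠ 0 := by
      rw [Ne, CharP.cast_eq_zero_iff F (ringChar F)]
      rw [Nat.Prime.dvd_factorial hp]
      omega
    exact (mul_eq_zero.mp h0').resolve_left hne
  obtain ⟨k, hk⟩ := hX
  refine ⟨k.comp (X - C y), ?_⟩
  have hf : f = (taylor y f).comp (X - C y) := by
    rw [Polynomial.taylor_apply, comp_assoc]
    simp
  rw [hf, hk, mul_comp, pow_comp, X_comp]

private lemma eq_zero_of_derivs {F : Type*} [Field F] [Fintype F] {s : ℕ}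
    (hs : 2 * s + 2 ≤ ringChar F) {y1 y2 : F} (hy : y1 ≠ y2) (f : F[X])
    (hdeg : f.degree < (2 * s + 2 : ℕ))
    (h1 : ∀ j : Fin (s + 1), (Polynomial.derivative^[(j : ℕ)] f).eval y1 = 0)
    (h2 : ∀ j : Fin (s + 1), (Polynomial.derivative^[(j : ℕ)] f).eval y2 = 0) :
    f = 0 := by
  have hp : (ringChar F).Prime := CharP.char_is_prime F (ringChar F)
  have hs' : s < ringChar F := by omega
  have d1 := pow_dvd_of_derivs_eq_zero hs' hp f y1 h1
  have d2 := pow_dvd_of_derivs_eq_zero hs' hp f y2 h2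
  have hco : IsCoprime ((X - C y1) ^ (s + 1)) ((X - C y2) ^ (s + 1)) :=
    (isCoprime_X_sub_C_of_isUnit_sub (sub_ne_zero_of_ne hy).isUnit).pow
  have hdvd : (X - C y1) ^ (s + 1) * (X - C y2) ^ (s + 1) ∣ f := hco.mul_dvd d1 d2
  refine eq_zero_of_dvd_of_degree_lt hdvd ?_
  have hdd : ((X - C y1) ^ (s + 1) * (X - C y2) ^ (s + 1)).degree
      = ((2 * s + 2 : ℕ) : WithBot ℕ) := by
    rw [degree_mul, degree_pow, degree_pow, degree_X_sub_C, degree_X_sub_C]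
    simp only [nsmul_eq_mul, mul_one]
    push_cast
    ring
  rw [hdd]
  exact hdeg

/-- Surjectivity of the map `ψ_{y1,y2}` when `2s + 2 ≤ n ≤ char F`. -/
theorem stmt_6 {F : Type*} [Field F] [Fintype F] (q n s : ℕ)
    (hq : Fintype.card F = q) (hsn : 2 * s + 2 ≤ n) (hchar : n ≤ ringChar F)
    (y1 y2 : F) (hy : y1 ≠ y2) (z1 z2 : Fin (s + 1) → F) :
    ∃ f : F[X], f.degree < n ∧
      (∀ j : Fin (s + 1), (Polynomial.derivative^[(j : ℕ)] f).eval y1 = z1 j) ∧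
      (∀ j : Fin (s + 1), (Polynomial.derivative^[(j : ℕ)] f).eval y2 = z2 j) := by
  set m := 2 * s + 2 with hm
  set P : (Fin m → F) → F[X] := fun c => ((Polynomial.degreeLTEquiv F m).symm c : F[X])
    with hP
  have hPdeg : ∀ c, (P c).degree < (m : ℕ) :=
    fun c => Polynomial.mem_degreeLT.mp ((Polynomial.degreeLTEquiv F m).symm c).2
  have hPinj : Function.Injective P := by
    intro c c' hcc
    have : (Polynomial.degreeLTEquiv F m).symm c = (Polynomial.degreeLTEquiv F m).symm c' :=
      Subtype.ext hcc
    exact (Polynomial.degreeLTEquiv F m).symm.injective this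
  set Φ : (Fin m → F) → (Fin (s + 1) → F) × (Fin (s + 1) → F) := fun c =>
    (fun j => (Polynomial.derivative^[(j : ℕ)] (P c)).eval y1,
     fun j => (Polynomial.derivative^[(j : ℕ)] (P c)).eval y2) with hΦ
  have hinj : Function.Injective Φ := by
    intro c c' hcc
    apply hPinj
    have hsub : P c - P c' = 0 := by
      apply eq_zero_of_derivs (le_trans hsn hchar) hy
      · calc (P c - P c').degree ≤ max (P c).degree (P c').degree := degree_sub_le _ _
          _ < (m : ℕ) := max_lt (hPdeg c) (hPdeg c')
      · intro j
        rw [Polynomial.iterate_derivative_sub, eval_sub, sub_eq_zero]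
        exact congrFun (congrArg Prod.fst hcc) j
      · intro j
        rw [Polynomial.iterate_derivative_sub, eval_sub, sub_eq_zero]
        exact congrFun (congrArg Prod.snd hcc) j
    exact sub_eq_zero.mp hsub
  have hcard : Fintype.card (Fin m → F)
      = Fintype.card ((Fin (s + 1) → F) × (Fin (s + 1) → F)) := by
    simp [Fintype.card_fun, hm]
    ring
  have hbij : Function.Bijective Φ :=
    (Fintype.bijective_iff_injective_and_card Φ).mpr ⟨hinj, hcard⟩
  obtain ⟨c, hc⟩ := hbij.surjective (z1, z2)
  refine ⟨P c, ?_, ?_, ?_⟩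
  · exact lt_of_lt_of_le (hPdeg c) (Nat.cast_le.mpr hsn)
  · intro j
    have := congrFun (congrArg Prod.fst hc) j
    simpa using this
  · intro j
    have := congrFun (congrArg Prod.snd hc) j
    simpa using this
end

section
/- Let F be a finite field with exactly q elements and let n, s be natural numbers with s+1 ≤ n ≤ 2s+2 and n ≤ char(F). Then for all y1, y2 ∈ F with y1 ≠ y2, the map ψ_{y1,y2} is injective on polynomials of degree < n: if f, g ∈ F[X] satisfy deg f < n, deg g < n, ψ_{y1}(f) = ψ_{y1}(g), and ψ_{y2}(f) = ψ_{y2}(g), then f = g. -/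
open Polynomial

/-- Injectivity of the map `ψ_{y1,y2}` on polynomials of degree `< n` when
`s + 1 ≤ n ≤ 2s + 2` and `n ≤ char F`. -/
theorem stmt_7 {F : Type*} [Field F] [Fintype F] (q n s : ℕ)
    (hq : Fintype.card F = q) (hsn : s + 1 ≤ n) (hn : n ≤ 2 * s + 2)
    (hchar : n ≤ ringChar F) (y1 y2 : F) (hy : y1 ≠ y2) (f g : F[X])
    (hf : f.degree < n) (hg : g.degree < n)
    (h1 : ∀ j : Fin (s + 1),
      (Polynomial.derivative^[(j : ℕ)] f).eval y1 = (Polynomial.derivative^[(j : ℕ)] g).eval y1)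
    (h2 : ∀ j : Fin (s + 1),
      (Polynomial.derivative^[(j : ℕ)] f).eval y2 = (Polynomial.derivative^[(j : ℕ)] g).eval y2) :
    f = g := by
  by_contra hne
  set p : F[X] := f - g with hp
  have hp0 : p ≠ 0 := sub_ne_zero.mpr hne
  have hcast : ∀ m ≤ s, m ≠ 0 → (m : F) ∈ nonZeroDivisors F := by
    intro m hm hm0
    refine mem_nonZeroDivisors_of_ne_zero ?_
    rw [Ne, CharP.cast_eq_zero_iff F (ringChar F)]
    intro hdvd
    have := Nat.le_of_dvd (Nat.pos_of_ne_zero hm0) hdvd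
    omega
  have hroot : ∀ y : F, (∀ j : Fin (s + 1),
      (Polynomial.derivative^[(j : ℕ)] f).eval y = (Polynomial.derivative^[(j : ℕ)] g).eval y) →
      s < p.rootMultiplicity y := by
    intro y hj
    refine lt_rootMultiplicity_of_isRoot_iterate_derivative_of_mem_nonZeroDivisors' hp0
      (fun m hm => ?_) hcast
    have := hj ⟨m, by omega⟩
    simp only [Fin.val_mk] at this
    show eval y (Polynomial.derivative^[m] (f - g)) = 0
    rw [Polynomial.iterate_derivative_sub, eval_sub, this, sub_self]
  have h1' := hroot y1 h1
  have h2' := hroot y2 h2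
  have hd1 : (X - C y1) ^ (s + 1) ∣ p :=
    dvd_trans (pow_dvd_pow _ h1') (p.pow_rootMultiplicity_dvd y1)
  have hd2 : (X - C y2) ^ (s + 1) ∣ p :=
    dvd_trans (pow_dvd_pow _ h2') (p.pow_rootMultiplicity_dvd y2)
  have hcop : IsCoprime ((X - C y1) ^ (s + 1)) ((X - C y2) ^ (s + 1)) :=
    (isCoprime_X_sub_C_of_isUnit_sub ((sub_ne_zero.mpr hy).isUnit)).pow
  have hdvd : (X - C y1) ^ (s + 1) * (X - C y2) ^ (s + 1) ∣ p := hcop.mul_dvd hd1 hd2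
  have hdeg : 2 * s + 2 ≤ p.natDegree := by
    have := Polynomial.natDegree_le_of_dvd hdvd hp0
    have hnd : ((X - C y1) ^ (s + 1) * (X - C y2) ^ (s + 1)).natDegree = 2 * s + 2 := by
      rw [natDegree_mul (pow_ne_zero _ (X_sub_C_ne_zero y1)) (pow_ne_zero _ (X_sub_C_ne_zero y2)),
        natDegree_pow, natDegree_pow, natDegree_X_sub_C, natDegree_X_sub_C]
      ring
    omega
  have hdeglt : p.degree < n := lt_of_le_of_lt (degree_sub_le f g) (max_lt hf hg)
  have := (natDegree_lt_iff_degree_lt hp0).mpr hdeglt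
  omega
end

section
/- Let F be a finite field with exactly q elements and let n, s be natural numbers with s+1 < n < 2s+2 and n ≤ char(F). Then for every natural number m with m ≤ q^{n−(s+1)} there exists a finite set T of right vertices of the KT graph with |T| = 2m and |Γ_R(T)| = 2m·q^{n−(s+1)} − m². (Equivalently, writing |T| = δ·q^{n−(s+1)}, the set T has exactly (1 − δ/4)·q^{n−(s+1)}·|T| left neighbors, so the right-to-left lossless expansion of the KT graph in this regime is tight up to a constant factor.) -/
open Polynomial

section Aux

set_option linter.unusedSectionVars false

variable {F : Type*} [Field F] [Fintype F]

lemma aux_eval_iter_deriv (y : F) (f : F[X]) (j : ℕ) :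
    (Polynomial.derivative^[j] f).eval y = (j.factorial : F) * (taylor y f).coeff j := by
  rw [taylor_coeff, ← factorial_smul_hasseDeriv]
  simp [nsmul_eq_mul]

lemma aux_fact_ne_zero {j : ℕ} (hj : j < ringChar F) : ((j.factorial : F)) ≠ 0 := by
  have hp : (ringChar F).Prime := CharP.char_is_prime F (ringChar F)
  have := ringChar.charP F
  rw [Ne, CharP.cast_eq_zero_iff F (ringChar F)]
  rw [hp.dvd_factorial]
  omega

lemma aux_taylor_pow (r : F) (p : F[X]) (k : ℕ) : taylor r (p ^ k) = (taylor r p) ^ k := by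
  rw [← taylorAlgHom_apply, map_pow, taylorAlgHom_apply]

lemma aux_taylor_xsuby (y : F) (k : ℕ) : taylor y ((X - C y) ^ k) = X ^ k := by
  rw [aux_taylor_pow, map_sub, taylor_X, taylor_C]; ring_nf

lemma aux_taylor_x (y : F) (k : ℕ) : taylor (-y) ((X : F[X]) ^ k) = (X - C y) ^ k := by
  rw [aux_taylor_pow, taylor_X]; rw [map_neg]; ring_nf

lemma aux_dvd_iff {s : ℕ} (hs : s + 1 ≤ ringChar F) (y : F) (f : F[X]) :
    (∀ j : Fin (s+1), (Polynomial.derivative^[(j:ℕ)] f).eval y = 0) ↔ (X - C y)^(s+1) ∣ f := by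
  have htay : (X - C y)^(s+1) ∣ f ↔ (X : F[X])^(s+1) ∣ taylor y f := by
    constructor
    · rintro ⟨g, rfl⟩
      rw [taylor_mul, aux_taylor_xsuby]
      exact Dvd.intro _ rfl
    · rintro ⟨h, hh⟩
      have hf : f = taylor (-y) (taylor y f) := by
        rw [taylor_taylor]; simp [taylor_zero]
      rw [hf, hh, taylor_mul, aux_taylor_x]
      exact Dvd.intro _ rfl
  rw [htay, X_pow_dvd_iff]
  constructor
  · intro h d hd
    have := h ⟨d, hd⟩
    rw [aux_eval_iter_deriv] at this
    have hfac : ((d.factorial : F)) ≠ 0 := aux_fact_ne_zero (by omega)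
    simpa [hfac] using this
  · intro h j
    rw [aux_eval_iter_deriv, h j j.2, mul_zero]

lemma aux_degLT_finite (n : ℕ) : {f : F[X] | f.degree < (n:ℕ)}.Finite := by
  have h : {f : F[X] | f.degree < (n:ℕ)} = (Polynomial.degreeLT F n : Set F[X]) := by
    ext f; simp [Polynomial.mem_degreeLT]
  rw [h, ← Set.finite_coe_iff]
  exact Finite.of_equiv _ (Polynomial.degreeLTEquiv F n).toEquiv.symm

lemma aux_degLT_card (n : ℕ) : {f : F[X] | f.degree < (n:ℕ)}.ncard = Fintype.card F ^ n := by
  have h : {f : F[X] | f.degree < (n:ℕ)} = (Polynomial.degreeLT F n : Set F[X]) := by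
    ext f; simp [Polynomial.mem_degreeLT]
  rw [h, ← Nat.card_coe_set_eq]
  have e : ((Polynomial.degreeLT F n : Set F[X]) : Type _) ≃ (Fin n → F) :=
    (Equiv.setCongr rfl).trans (Polynomial.degreeLTEquiv F n).toEquiv
  rw [Nat.card_congr e]
  simp [Nat.card_eq_fintype_card]

lemma aux_ker_eq {s n : ℕ} (hsn : s + 1 < n) (y : F) :
    {f : F[X] | f.degree < (n:ℕ) ∧ (X - C y)^(s+1) ∣ f}
      = (fun g => (X - C y)^(s+1) * g) '' {g : F[X] | g.degree < ((n - (s+1) : ℕ) : WithBot ℕ)} := by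
  have hc0 : ((X - C y)^(s+1) : F[X]) ≠ 0 := pow_ne_zero _ (X_sub_C_ne_zero y)
  have hcdeg : ((X - C y)^(s+1) : F[X]).natDegree = s + 1 := by
    rw [natDegree_pow, natDegree_X_sub_C, mul_one]
  ext f
  constructor
  · rintro ⟨hdeg, g, rfl⟩
    refine ⟨g, ?_, rfl⟩
    by_cases hg : g = 0
    · simp only [hg, Set.mem_setOf_eq, degree_zero]
      exact WithBot.bot_lt_coe _
    · have hne : (X - C y)^(s+1) * g ≠ 0 := mul_ne_zero hc0 hg
      have h1 : ((X - C y)^(s+1) * g).natDegree < n :=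
        (natDegree_lt_iff_degree_lt hne).2 hdeg
      rw [natDegree_mul hc0 hg, hcdeg] at h1
      exact (natDegree_lt_iff_degree_lt hg).1 (by omega)
  · rintro ⟨g, hg, rfl⟩
    refine ⟨?_, dvd_mul_right _ _⟩
    by_cases hg0 : g = 0
    · simp only [hg0, mul_zero, Set.mem_setOf_eq, degree_zero]
      exact WithBot.bot_lt_coe _
    · have h1 : g.natDegree < n - (s+1) := (natDegree_lt_iff_degree_lt hg0).2 hg
      have hne : (X - C y)^(s+1) * g ≠ 0 := mul_ne_zero hc0 hg0
      refine (natDegree_lt_iff_degree_lt hne).1 ?_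
      rw [natDegree_mul hc0 hg0, hcdeg]
      omega

lemma aux_zero {s n : ℕ} (hn : n < 2*s+2) {y₁ y₂ : F} (hy : y₁ ≠ y₂) {f : F[X]}
    (hdeg : f.degree < (n:ℕ)) (h1 : (X - C y₁)^(s+1) ∣ f) (h2 : (X - C y₂)^(s+1) ∣ f) :
    f = 0 := by
  by_contra hf
  have hcop : IsCoprime ((X - C y₁)^(s+1) : F[X]) ((X - C y₂)^(s+1)) :=
    (isCoprime_X_sub_C_of_isUnit_sub ((sub_ne_zero.2 hy).isUnit)).pow
  have hdvd : (X - C y₁)^(s+1) * (X - C y₂)^(s+1) ∣ f := hcop.mul_dvd h1 h2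
  have hle := Polynomial.natDegree_le_natDegree (degree_le_of_dvd hdvd hf)
  simp only [natDegree_mul (pow_ne_zero _ (X_sub_C_ne_zero _)) (pow_ne_zero _ (X_sub_C_ne_zero _)),
    natDegree_pow, natDegree_X_sub_C, mul_one] at hle
  have := (natDegree_lt_iff_degree_lt hf).2 hdeg
  omega

lemma aux_ncard_prod {α β : Type*} (s : Set α) (t : Set β) :
    (s ×ˢ t).ncard = s.ncard * t.ncard := by
  rw [← Nat.card_coe_set_eq, ← Nat.card_coe_set_eq, ← Nat.card_coe_set_eq,
    Nat.card_congr (Equiv.Set.prod s t), Nat.card_prod]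

end Aux

/-- Tightness of the right-to-left expansion of the KT graph when `s + 1 < n < 2s + 2`:
there is a set of right vertices of size `2m` with exactly `2m·q^{n-(s+1)} - m²`
left neighbors. -/
theorem stmt_9 {F : Type*} [Field F] [Fintype F] (q n s : ℕ)
    (hq : Fintype.card F = q) (hsn : s + 1 < n) (hn : n < 2 * s + 2)
    (hchar : n ≤ ringChar F) (m : ℕ) (hm : m ≤ q ^ (n - (s + 1))) :
    ∃ T : Set (F × (Fin (s + 1) → F)), T.ncard = 2 * m ∧
      (Set.ncard {f : F[X] | f.degree < n ∧ ∃ w ∈ T, KTAdj s f w} : ℤ) =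
        2 * (m : ℤ) * (q : ℤ) ^ (n - (s + 1)) - (m : ℤ) ^ 2 := by
  subst hq
  have hs1 : s + 1 ≤ ringChar F := le_trans (le_of_lt hsn) hchar
  obtain ⟨y₁, y₂, hy⟩ := exists_pair_ne F
  set c₁ : F[X] := (X - C y₁)^(s+1) with hc₁
  set c₂ : F[X] := (X - C y₂)^(s+1) with hc₂
  set K₁ : Set F[X] := {f | f.degree < (n:ℕ) ∧ c₁ ∣ f} with hK₁
  set K₂ : Set F[X] := {f | f.degree < (n:ℕ) ∧ c₂ ∣ f} with hK₂
  have hWfin : {f : F[X] | f.degree < (n:ℕ)}.Finite := aux_degLT_finite n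
  have hK₁fin : K₁.Finite := hWfin.subset fun f hf => hf.1
  have hK₂fin : K₂.Finite := hWfin.subset fun f hf => hf.1
  have hKcard : ∀ y : F, ({f : F[X] | f.degree < (n:ℕ) ∧ (X - C y)^(s+1) ∣ f}).ncard
      = Fintype.card F ^ (n - (s+1)) := by
    intro y
    rw [aux_ker_eq hsn y, Set.ncard_image_of_injOn
      (Set.injOn_of_injective (mul_right_injective₀ (pow_ne_zero _ (X_sub_C_ne_zero y)))),
      aux_degLT_card]
  have hK₁card : K₁.ncard = Fintype.card F ^ (n - (s+1)) := hKcard y₁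
  have hK₂card : K₂.ncard = Fintype.card F ^ (n - (s+1)) := hKcard y₂
  -- kernels are closed under subtraction
  have hsubmem : ∀ (y : F) (a b : F[X]), a ∈ {f : F[X] | f.degree < (n:ℕ) ∧ (X - C y)^(s+1) ∣ f} →
      b ∈ {f : F[X] | f.degree < (n:ℕ) ∧ (X - C y)^(s+1) ∣ f} →
      a - b ∈ {f : F[X] | f.degree < (n:ℕ) ∧ (X - C y)^(s+1) ∣ f} := by
    intro y a b ha hb
    exact ⟨lt_of_le_of_lt (degree_sub_le a b) (max_lt ha.1 hb.1), dvd_sub ha.2 hb.2⟩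
  have hzero : ∀ f : F[X], f ∈ K₁ → f ∈ K₂ → f = 0 := fun f h1 h2 =>
    aux_zero hn hy h1.1 h1.2 h2.2
  -- the core uniqueness statement
  have huniq : ∀ a ∈ K₂, ∀ b ∈ K₁, ∀ a' ∈ K₂, ∀ b' ∈ K₁, a + b = a' + b' →
      a = a' ∧ b = b' := by
    intro a ha b hb a' ha' b' hb' h
    have h1 : a - a' = b' - b := by linear_combination h
    have h2 : a - a' ∈ K₂ := hsubmem y₂ a a' ha ha'
    have h3 : a - a' ∈ K₁ := h1 ▸ hsubmem y₁ b' b hb' hb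
    have h4 : a - a' = 0 := hzero _ h3 h2
    constructor
    · exact sub_eq_zero.1 h4
    · have : b' - b = 0 := h1 ▸ h4
      exact (sub_eq_zero.1 this).symm
  -- choose subsets of size m
  obtain ⟨S₁, hS₁sub, hS₁card⟩ :=
    Set.exists_subset_card_eq (show m ≤ K₁.ncard by rw [hK₁card]; exact hm)
  obtain ⟨S₂, hS₂sub, hS₂card⟩ :=
    Set.exists_subset_card_eq (show m ≤ K₂.ncard by rw [hK₂card]; exact hm)
  have hS₁fin : S₁.Finite := hK₁fin.subset hS₁sub
  have hS₂fin : S₂.Finite := hK₂fin.subset hS₂sub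
  -- evaluation maps
  set D : F → F[X] → (Fin (s+1) → F) :=
    fun y f j => (Polynomial.derivative^[(j:ℕ)] f).eval y with hD
  have hDker : ∀ (y : F) (f : F[X]), D y f = 0 ↔ (X - C y)^(s+1) ∣ f := by
    intro y f
    rw [← aux_dvd_iff hs1 y f]
    constructor
    · intro h j; exact congrFun h j
    · intro h; funext j; exact h j
  have hDsub : ∀ (y : F) (a b : F[X]), D y (a - b) = D y a - D y b := by
    intro y a b; funext j
    simp [hD, Polynomial.iterate_derivative_sub]
  have hDadd : ∀ (y : F) (a b : F[X]), D y (a + b) = D y a + D y b := by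
    intro y a b; funext j
    simp [hD, iterate_map_add]
  have hKT : ∀ (f : F[X]) (y : F) (z : Fin (s+1) → F), KTAdj s f (y, z) ↔ D y f = z := by
    intro f y z
    constructor
    · intro h; funext j; exact h j
    · intro h j; exact congrFun h j
  -- injectivity of D on the opposite kernels
  have hDinj₁ : Set.InjOn (D y₁) S₂ := by
    intro a ha a' ha' h
    have h0 : D y₁ (a - a') = 0 := by rw [hDsub, h, sub_self]
    have h1 : a - a' ∈ K₁ :=
      ⟨lt_of_le_of_lt (degree_sub_le a a') (max_lt (hS₂sub ha).1 (hS₂sub ha').1),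
        (hDker y₁ _).1 h0⟩
    have h2 : a - a' ∈ K₂ := hsubmem y₂ a a' (hS₂sub ha) (hS₂sub ha')
    exact sub_eq_zero.1 (hzero _ h1 h2)
  have hDinj₂ : Set.InjOn (D y₂) S₁ := by
    intro a ha a' ha' h
    have h0 : D y₂ (a - a') = 0 := by rw [hDsub, h, sub_self]
    have h2 : a - a' ∈ K₂ :=
      ⟨lt_of_le_of_lt (degree_sub_le a a') (max_lt (hS₁sub ha).1 (hS₁sub ha').1),
        (hDker y₂ _).1 h0⟩
    have h1 : a - a' ∈ K₁ := hsubmem y₁ a a' (hS₁sub ha) (hS₁sub ha')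
    exact sub_eq_zero.1 (hzero _ h1 h2)
  set Z₁ : Set (Fin (s+1) → F) := (D y₁) '' S₂ with hZ₁
  set Z₂ : Set (Fin (s+1) → F) := (D y₂) '' S₁ with hZ₂
  set T : Set (F × (Fin (s+1) → F)) :=
    (fun z => (y₁, z)) '' Z₁ ∪ (fun z => (y₂, z)) '' Z₂ with hT
  refine ⟨T, ?_, ?_⟩
  · -- |T| = 2m
    have hZ₁card : Z₁.ncard = m := by rw [hZ₁, Set.ncard_image_of_injOn hDinj₁, hS₂card]
    have hZ₂card : Z₂.ncard = m := by rw [hZ₂, Set.ncard_image_of_injOn hDinj₂, hS₁card]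
    have hfin₁ : ((fun z => (y₁, z)) '' Z₁).Finite := (hS₂fin.image _).image _
    have hfin₂ : ((fun z => (y₂, z)) '' Z₂).Finite := (hS₁fin.image _).image _
    have hdisj : Disjoint ((fun z => (y₁, z)) '' Z₁) ((fun z => (y₂, z)) '' Z₂) := by
      rw [Set.disjoint_left]
      rintro w ⟨z, _, rfl⟩ ⟨z', _, hw⟩
      exact hy (congrArg Prod.fst hw).symm
    have hmk₁ : Function.Injective (fun z : Fin (s+1) → F => (y₁, z)) :=
      fun a b h => (Prod.ext_iff.1 h).2
    have hmk₂ : Function.Injective (fun z : Fin (s+1) → F => (y₂, z)) :=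
      fun a b h => (Prod.ext_iff.1 h).2
    rw [hT, Set.ncard_union_eq hdisj hfin₁ hfin₂,
      Set.ncard_image_of_injective _ hmk₁, Set.ncard_image_of_injective _ hmk₂,
      hZ₁card, hZ₂card]
    omega
  · -- the neighborhood count
    set add : F[X] × F[X] → F[X] := fun p => p.1 + p.2 with hadd
    set A : Set F[X] := add '' (S₂ ×ˢ K₁) with hA
    set B : Set F[X] := add '' (S₁ ×ˢ K₂) with hB
    have hAfin : A.Finite := ((hS₂fin.prod hK₁fin).image _)
    have hBfin : B.Finite := ((hS₁fin.prod hK₂fin).image _)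
    -- the neighborhood is A ∪ B
    have hNeq : {f : F[X] | f.degree < (n:ℕ) ∧ ∃ w ∈ T, KTAdj s f w} = A ∪ B := by
      ext f
      constructor
      · rintro ⟨hdeg, w, hw, hadj⟩
        rcases hw with ⟨z, ⟨g, hg, rfl⟩, rfl⟩ | ⟨z, ⟨g, hg, rfl⟩, rfl⟩
        · left
          refine ⟨(g, f - g), ⟨hg, ?_⟩, by simp [hadd]⟩
          have hDf : D y₁ f = D y₁ g := by
            funext j; exact hadj j
          refine ⟨lt_of_le_of_lt (degree_sub_le f g) (max_lt hdeg (hS₂sub hg).1), ?_⟩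
          exact (hDker y₁ _).1 (by rw [hDsub, hDf, sub_self])
        · right
          refine ⟨(g, f - g), ⟨hg, ?_⟩, by simp [hadd]⟩
          have hDf : D y₂ f = D y₂ g := by
            funext j; exact hadj j
          refine ⟨lt_of_le_of_lt (degree_sub_le f g) (max_lt hdeg (hS₁sub hg).1), ?_⟩
          exact (hDker y₂ _).1 (by rw [hDsub, hDf, sub_self])
      · rintro (⟨⟨g, h⟩, ⟨hg, hh⟩, rfl⟩ | ⟨⟨g, h⟩, ⟨hg, hh⟩, rfl⟩)
        · refine ⟨lt_of_le_of_lt (degree_add_le g h) (max_lt (hS₂sub hg).1 hh.1), ?_⟩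
          refine ⟨(y₁, D y₁ g), Or.inl ⟨D y₁ g, ⟨g, hg, rfl⟩, rfl⟩, ?_⟩
          rw [hKT, hDadd, (hDker y₁ h).2 hh.2, add_zero]
        · refine ⟨lt_of_le_of_lt (degree_add_le g h) (max_lt (hS₁sub hg).1 hh.1), ?_⟩
          refine ⟨(y₂, D y₂ g), Or.inr ⟨D y₂ g, ⟨g, hg, rfl⟩, rfl⟩, ?_⟩
          rw [hKT, hDadd, (hDker y₂ h).2 hh.2, add_zero]
    have hAinj : Set.InjOn add (S₂ ×ˢ K₁) := by
      rintro ⟨a, b⟩ ⟨ha, hb⟩ ⟨a', b'⟩ ⟨ha', hb'⟩ h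
      obtain ⟨h1, h2⟩ := huniq a (hS₂sub ha) b hb a' (hS₂sub ha') b' hb' h
      simp [h1, h2]
    have hBinj : Set.InjOn add (S₁ ×ˢ K₂) := by
      rintro ⟨a, b⟩ ⟨ha, hb⟩ ⟨a', b'⟩ ⟨ha', hb'⟩ h
      obtain ⟨h1, h2⟩ := huniq b hb a (hS₁sub ha) b' hb' a' (hS₁sub ha')
        (by simpa [hadd, add_comm] using h)
      simp [h1, h2]
    have hIinj : Set.InjOn add (S₂ ×ˢ S₁) := by
      rintro ⟨a, b⟩ ⟨ha, hb⟩ ⟨a', b'⟩ ⟨ha', hb'⟩ h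
      obtain ⟨h1, h2⟩ := huniq a (hS₂sub ha) b (hS₁sub hb) a' (hS₂sub ha') b' (hS₁sub hb') h
      simp [h1, h2]
    have hAcard : A.ncard = m * Fintype.card F ^ (n - (s+1)) := by
      rw [hA, Set.ncard_image_of_injOn hAinj, aux_ncard_prod, hS₂card, hK₁card]
    have hBcard : B.ncard = m * Fintype.card F ^ (n - (s+1)) := by
      rw [hB, Set.ncard_image_of_injOn hBinj, aux_ncard_prod, hS₁card, hK₂card]
    have hABeq : A ∩ B = add '' (S₂ ×ˢ S₁) := by
      ext f
      constructor
      · rintro ⟨⟨⟨a, b⟩, ⟨ha, hb⟩, rfl⟩, ⟨⟨b', a'⟩, ⟨hb', ha'⟩, hf⟩⟩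
        have h' : a + b = a' + b' := by
          have : b' + a' = a + b := hf
          linear_combination -this
        obtain ⟨h1, h2⟩ := huniq a (hS₂sub ha) b hb a' ha' b' (hS₁sub hb') h'
        exact ⟨(a, b), ⟨ha, by rw [h2]; exact hb'⟩, rfl⟩
      · rintro ⟨⟨a, b⟩, ⟨ha, hb⟩, rfl⟩
        constructor
        · exact ⟨(a, b), ⟨ha, hS₁sub hb⟩, rfl⟩
        · exact ⟨(b, a), ⟨hb, hS₂sub ha⟩, by simp [hadd, add_comm]⟩
    have hABcard : (A ∩ B).ncard = m * m := by
      rw [hABeq, Set.ncard_image_of_injOn hIinj, aux_ncard_prod, hS₂card, hS₁card]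
    have hkey := Set.ncard_union_add_ncard_inter A B hAfin hBfin
    rw [hNeq]
    rw [hAcard, hBcard, hABcard] at hkey
    have hcast : (((A ∪ B).ncard : ℤ)) + (m : ℤ) * m =
        (m : ℤ) * (Fintype.card F : ℤ) ^ (n - (s+1))
          + (m : ℤ) * (Fintype.card F : ℤ) ^ (n - (s+1)) := by
      exact_mod_cast congrArg (fun t : ℕ => (t : ℤ)) hkey
    have hm2 : (m : ℤ)^2 = (m : ℤ) * m := sq (m : ℤ)
    linarith
end

section
/- (Structure of the image of the CRT map) Let F be a field, let s, n be natural numbers with s+1 ≤ n < 2s+2, and let y1, y2 ∈ F with y1 ≠ y2. Then for all polynomials r1, r2 ∈ F[X] of degree ≤ s, the following are equivalent: (i) there exists f ∈ F[X] with deg f < n, f %ₘ g_{y1} = r1, and f %ₘ g_{y2} = r2; (ii) there exists h ∈ F[X] with deg h < n − (s+1) (in particular h = 0 is allowed) such that r2 − r1 = (h·g_{y1}) %ₘ g_{y2}. -/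
/-! The polynomials `f` with `f %ₘ g₁ = r₁` are exactly the `q * g₁ + r₁`, and such an `f` has degree
`< n` iff `deg q < n - deg g₁`. As `deg r₁ < deg g₂`, reducing modulo `g₂` turns `f %ₘ g₂ = r₂`
into `r₂ - r₁ = (q * g₁) %ₘ g₂`. -/

open Polynomial

namespace Polynomial

variable {R : Type*} [CommRing R]

theorem degree_add_lt_iff_of_degree_lt {p q : R[X]} {n : WithBot ℕ} (hq : q.degree < n) :
    (p + q).degree < n ↔ p.degree < n :=
  ⟨fun h => by simpa using (degree_sub_le (p + q) q).trans_lt (max_lt h hq),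
    fun h => (degree_add_le p q).trans_lt (max_lt h hq)⟩

theorem Monic.degree_mul_lt_iff_s13 [Nontrivial R] {g : R[X]} (hg : g.Monic) {q : R[X]} {n : ℕ} :
    (q * g).degree < n ↔ q.degree < (n - g.natDegree : ℕ) := by
  rcases eq_or_ne q 0 with rfl | hq
  · simp
  · rw [hg.degree_mul, degree_eq_natDegree hq, degree_eq_natDegree hg.ne_zero]
    norm_cast
    omega

theorem Monic.modByMonic_eq_iff_exists_eq_mul_add {g f r : R[X]} (hg : g.Monic)
    (hr : r.degree < g.degree) : f %ₘ g = r ↔ ∃ q, f = q * g + r := by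
  constructor
  · rintro rfl
    exact ⟨f /ₘ g, by rw [mul_comm, add_comm, modByMonic_add_div]⟩
  · rintro ⟨q, rfl⟩
    exact (div_modByMonic_unique q r hg ⟨by ring, hr⟩).2

theorem exists_degree_lt_modByMonic_eq_modByMonic_eq_iff [Nontrivial R] {g₁ g₂ r₁ r₂ : R[X]}
    {n : ℕ} (hg₁ : g₁.Monic) (hg₂ : g₂.Monic) (hr₁g₁ : r₁.degree < g₁.degree)
    (hr₁g₂ : r₁.degree < g₂.degree) (hr₁n : r₁.degree < n) :
    (∃ f : R[X], f.degree < n ∧ f %ₘ g₁ = r₁ ∧ f %ₘ g₂ = r₂) ↔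
      ∃ q : R[X], q.degree < (n - g₁.natDegree : ℕ) ∧ r₂ - r₁ = (q * g₁) %ₘ g₂ := by
  have lift : (∃ f : R[X], f.degree < n ∧ f %ₘ g₁ = r₁ ∧ f %ₘ g₂ = r₂) ↔
      ∃ q : R[X], (q * g₁ + r₁).degree < n ∧ (q * g₁ + r₁) %ₘ g₂ = r₂ := by
    simp_rw [hg₁.modByMonic_eq_iff_exists_eq_mul_add hr₁g₁]
    constructor
    · rintro ⟨f, hf, ⟨q, rfl⟩, hf₂⟩
      exact ⟨q, hf, hf₂⟩
    · rintro ⟨q, hf, hf₂⟩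
      exact ⟨_, hf, ⟨q, rfl⟩, hf₂⟩
  rw [lift]
  refine exists_congr fun q => and_congr ?_ ?_
  · rw [degree_add_lt_iff_of_degree_lt hr₁n, hg₁.degree_mul_lt_iff_s13]
  · rw [add_modByMonic, (modByMonic_eq_self_iff hg₂).2 hr₁g₂, sub_eq_iff_eq_add, eq_comm]

end Polynomial

theorem stmt_13_general {F : Type*} [Field F] (s n : ℕ) (hsn : s + 1 ≤ n)
    (y1 y2 : F) (r1 r2 : F[X])
    (hr1 : r1.degree ≤ s) :
    (∃ f : F[X], f.degree < n ∧
        f %ₘ ((X - C y1) ^ (s + 1)) = r1 ∧ f %ₘ ((X - C y2) ^ (s + 1)) = r2) ↔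
    (∃ h : F[X], h.degree < (n - (s + 1) : ℕ) ∧
        r2 - r1 = (h * (X - C y1) ^ (s + 1)) %ₘ ((X - C y2) ^ (s + 1))) := by
  have hmonic (y : F) : ((X - C y) ^ (s + 1)).Monic := (monic_X_sub_C y).pow _
  have hnatDegree (y : F) : ((X - C y) ^ (s + 1)).natDegree = s + 1 := by simp
  have hr1lt (y : F) : r1.degree < ((X - C y) ^ (s + 1)).degree := by
    rw [degree_eq_natDegree (hmonic y).ne_zero, hnatDegree]
    exact hr1.trans_lt (by exact_mod_cast s.lt_succ_self)
  have hr1n : r1.degree < n := hr1.trans_lt (by exact_mod_cast hsn)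
  rw [exists_degree_lt_modByMonic_eq_modByMonic_eq_iff (hmonic y1) (hmonic y2) (hr1lt y1)
    (hr1lt y2) hr1n, hnatDegree]

/-- Structure of the image of the CRT map: for `r1, r2` of degree `≤ s`, the pair
`(r1, r2)` lies in the image of `P_{<n}` under `f ↦ (f %ₘ g_{y1}, f %ₘ g_{y2})` iff
`r2 - r1 = (h · g_{y1}) %ₘ g_{y2}` for some `h` of degree `< n - (s + 1)`. -/
theorem stmt_13 {F : Type*} [Field F] (s n : ℕ) (hsn : s + 1 ≤ n) (hn : n < 2 * s + 2)
    (y1 y2 : F) (hy : y1 ≠ y2) (r1 r2 : F[X])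
    (hr1 : r1.degree ≤ s) (hr2 : r2.degree ≤ s) :
    (∃ f : F[X], f.degree < n ∧
        f %ₘ ((X - C y1) ^ (s + 1)) = r1 ∧ f %ₘ ((X - C y2) ^ (s + 1)) = r2) ↔
    (∃ h : F[X], h.degree < (n - (s + 1) : ℕ) ∧
        r2 - r1 = (h * (X - C y1) ^ (s + 1)) %ₘ ((X - C y2) ^ (s + 1))) :=
  stmt_13_general s n hsn y1 y2 r1 r2 hr1
end

section
/- Let F be a field, let s, n be natural numbers with s+1 < n, and let y1, y2 ∈ F with y1 ≠ y2. Define ρ(h) := (h·g_{y1}) /ₘ g_{y2} for h ∈ F[X]. Then ρ maps the set of polynomials of degree < n−(s+1) into itself, is F-linear, and is a bijection of the F-vector space of polynomials of degree < n−(s+1) onto itself. -/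
/-! Multiplying by `g_{y₁}` and dividing by `g_{y₂}` is `F`-linear, because division by a monic
polynomial is. It preserves degrees: `deg (h g_{y₁}) = deg h + (s + 1)`, and dividing by the monic
`g_{y₂}` of degree `s + 1` takes that much off again. A degree-preserving linear map has trivial
kernel, and an injective endomorphism of the finite-dimensional space of polynomials of degree
`< n - (s + 1)` is bijective. -/

open Polynomial

noncomputable def gPoly {F : Type*} [Field F] (s : ℕ) (y : F) : F[X] := (X - C y) ^ (s + 1)

namespace Polynomial

section CommRing

variable {R : Type*} [CommRing R]

theorem add_divByMonic (p₁ p₂ q : R[X]) : (p₁ + p₂) /ₘ q = p₁ /ₘ q + p₂ /ₘ q := by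
  by_cases hq : q.Monic
  · nontriviality R
    exact (div_modByMonic_unique (p₁ /ₘ q + p₂ /ₘ q) (p₁ %ₘ q + p₂ %ₘ q) hq
      ⟨by linear_combination modByMonic_add_div p₁ q + modByMonic_add_div p₂ q,
        (degree_add_le _ _).trans_lt
          (max_lt (degree_modByMonic_lt _ hq) (degree_modByMonic_lt _ hq))⟩).1
  · simp only [divByMonic_eq_of_not_monic _ hq, add_zero]

theorem smul_divByMonic (c : R) (p q : R[X]) : (c • p) /ₘ q = c • (p /ₘ q) := by
  by_cases hq : q.Monic
  · nontriviality R
    exact (div_modByMonic_unique (c • (p /ₘ q)) (c • (p %ₘ q)) hq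
      ⟨by rw [mul_smul_comm, ← smul_add, modByMonic_add_div],
        (degree_smul_le _ _).trans_lt (degree_modByMonic_lt _ hq)⟩).1
  · simp only [divByMonic_eq_of_not_monic _ hq, smul_zero]

noncomputable def divByMonicHom (q : R[X]) : R[X] →ₗ[R] R[X] where
  toFun p := p /ₘ q
  map_add' p₁ p₂ := add_divByMonic p₁ p₂ q
  map_smul' c p := smul_divByMonic c p q

noncomputable def mulDivByMonicHom (g q : R[X]) : R[X] →ₗ[R] R[X] :=
  divByMonicHom q ∘ₗ LinearMap.mulRight R g

@[simp]
theorem mulDivByMonicHom_apply (g q p : R[X]) : mulDivByMonicHom g q p = (p * g) /ₘ q := rfl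

end CommRing

section Domain

variable {R : Type*} [CommRing R] [IsDomain R] {g q : R[X]}

theorem degree_mulDivByMonicHom_apply (hq : q.Monic) (hgq : g.degree = q.degree) (p : R[X]) :
    (mulDivByMonicHom g q p).degree = p.degree := by
  rcases eq_or_ne p 0 with rfl | hp
  · simp
  have hq_le : q.degree ≤ (p * g).degree := by
    rw [degree_mul, hgq]
    exact le_add_of_nonneg_left (zero_le_degree_iff.mpr hp)
  have hsum := degree_add_divByMonic hq hq_le
  rw [degree_mul, hgq, add_comm p.degree] at hsum
  exact (WithBot.add_left_inj (degree_ne_bot.mpr hq.ne_zero)).mp hsum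

theorem injective_mulDivByMonicHom (hq : q.Monic) (hgq : g.degree = q.degree) :
    Function.Injective (mulDivByMonicHom g q) := by
  refine (injective_iff_map_eq_zero _).mpr fun p hp => ?_
  rw [← degree_eq_bot, ← degree_mulDivByMonicHom_apply hq hgq, hp, degree_zero]

end Domain

theorem bijOn_mulDivByMonicHom_degreeLT {K : Type*} [Field K] {g q : K[X]} (hq : q.Monic)
    (hgq : g.degree = q.degree) (m : ℕ) :
    Set.BijOn (mulDivByMonicHom g q) (degreeLT K m) (degreeLT K m) := by
  have : FiniteDimensional K (degreeLT K m) := (degreeLTEquiv K m).symm.finiteDimensional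
  have hmaps : ∀ p ∈ degreeLT K m, mulDivByMonicHom g q p ∈ degreeLT K m := fun p hp => by
    rwa [mem_degreeLT, degree_mulDivByMonicHom_apply hq hgq, ← mem_degreeLT]
  have hinj := (injective_mulDivByMonicHom hq hgq).injOn (s := degreeLT K m)
  exact ⟨hmaps, hinj, (LinearMap.injOn_iff_surjOn hmaps).mp hinj⟩

end Polynomial

theorem stmt_15_general {F : Type*} [Field F] (s n : ℕ)
    (y1 y2 : F) :
    (∀ h : F[X], h.degree < (n - (s + 1) : ℕ) →
        ((h * gPoly s y1) /ₘ gPoly s y2).degree < (n - (s + 1) : ℕ)) ∧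
    (∀ h h' : F[X],
        ((h + h') * gPoly s y1) /ₘ gPoly s y2 =
          (h * gPoly s y1) /ₘ gPoly s y2 + (h' * gPoly s y1) /ₘ gPoly s y2) ∧
    (∀ (a : F) (h : F[X]),
        ((C a * h) * gPoly s y1) /ₘ gPoly s y2 = C a * ((h * gPoly s y1) /ₘ gPoly s y2)) ∧
    Set.BijOn (fun h : F[X] => (h * gPoly s y1) /ₘ gPoly s y2)
      {h : F[X] | h.degree < (n - (s + 1) : ℕ)}
      {h : F[X] | h.degree < (n - (s + 1) : ℕ)} := by
  have hmonic : (gPoly s y2).Monic := (monic_X_sub_C y2).pow _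
  have hdeg : (gPoly s y1).degree = (gPoly s y2).degree := by simp [gPoly]
  set ρ := mulDivByMonicHom (gPoly s y1) (gPoly s y2)
  refine ⟨fun h hh => ?_, fun h h' => ?_, fun a h => ?_, ?_⟩
  · rwa [← mulDivByMonicHom_apply, degree_mulDivByMonicHom_apply hmonic hdeg]
  · simpa only [ρ, mulDivByMonicHom_apply] using map_add ρ h h'
  · simpa only [ρ, mulDivByMonicHom_apply, smul_eq_C_mul] using map_smul ρ a h
  · have hset : {h : F[X] | h.degree < (n - (s + 1) : ℕ)} = degreeLT F (n - (s + 1)) :=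
      Set.ext fun _ => mem_degreeLT.symm
    rw [hset]
    exact bijOn_mulDivByMonicHom_degreeLT hmonic hdeg _

/-- The map `ρ(h) = (h · g_{y1}) /ₘ g_{y2}` preserves the space of polynomials of
degree `< n - (s+1)`, is `F`-linear, and is a bijection of that space onto itself. -/
theorem stmt_15 {F : Type*} [Field F] (s n : ℕ) (hsn : s + 1 < n)
    (y1 y2 : F) (hy : y1 ≠ y2) :
    (∀ h : F[X], h.degree < (n - (s + 1) : ℕ) →
        ((h * gPoly s y1) /ₘ gPoly s y2).degree < (n - (s + 1) : ℕ)) ∧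
    (∀ h h' : F[X],
        ((h + h') * gPoly s y1) /ₘ gPoly s y2 =
          (h * gPoly s y1) /ₘ gPoly s y2 + (h' * gPoly s y1) /ₘ gPoly s y2) ∧
    (∀ (a : F) (h : F[X]),
        ((C a * h) * gPoly s y1) /ₘ gPoly s y2 = C a * ((h * gPoly s y1) /ₘ gPoly s y2)) ∧
    Set.BijOn (fun h : F[X] => (h * gPoly s y1) /ₘ gPoly s y2)
      {h : F[X] | h.degree < (n - (s + 1) : ℕ)}
      {h : F[X] | h.degree < (n - (s + 1) : ℕ)} :=
  stmt_15_general s n y1 y2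
end

section
/- Let F be a field, let s, n be natural numbers with s+1 < n ≤ 2s+2, and let y1, y2 ∈ F with y1 ≠ y2. Define σ(h) := (h·g_{y1}) %ₘ g_{y2} for h ∈ F[X]; then σ maps polynomials of degree < n−(s+1) to polynomials of degree ≤ s, is F-linear, and is injective on the set of polynomials of degree < n−(s+1): if h, h' ∈ F[X] have degree < n−(s+1) and (h·g_{y1}) %ₘ g_{y2} = (h'·g_{y1}) %ₘ g_{y2}, then h = h'. -/
open Polynomial

lemma withBot_le_of_lt_succ {a : WithBot ℕ} {s : ℕ}
    (h : a < ((s + 1 : ℕ) : WithBot ℕ)) : a ≤ (s : ℕ) := by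
  cases a with
  | bot => exact bot_le
  | coe a =>
    simp only [Nat.cast_withBot] at h ⊢
    exact WithBot.coe_le_coe.mpr (Nat.lt_succ_iff.mp (WithBot.coe_lt_coe.mp h))

lemma gPoly_monic {F : Type*} [Field F] (s : ℕ) (y : F) : (gPoly s y).Monic :=
  (monic_X_sub_C y).pow _

lemma gPoly_degree {F : Type*} [Field F] (s : ℕ) (y : F) :
    (gPoly s y).degree = (s + 1 : ℕ) := by
  simp [gPoly, degree_pow, degree_X_sub_C]

/-- The map `σ(h) = (h · g_{y1}) %ₘ g_{y2}` sends polynomials of degree `< n - (s+1)`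
to polynomials of degree `≤ s`, is `F`-linear, and is injective on the set of
polynomials of degree `< n - (s+1)`. -/
theorem stmt_16 {F : Type*} [Field F] (s n : ℕ) (hsn : s + 1 < n) (hn : n ≤ 2 * s + 2)
    (y1 y2 : F) (hy : y1 ≠ y2) :
    (∀ h : F[X], h.degree < (n - (s + 1) : ℕ) →
        ((h * gPoly s y1) %ₘ gPoly s y2).degree ≤ s) ∧
    (∀ h h' : F[X],
        ((h + h') * gPoly s y1) %ₘ gPoly s y2 =
          (h * gPoly s y1) %ₘ gPoly s y2 + (h' * gPoly s y1) %ₘ gPoly s y2) ∧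
    (∀ (a : F) (h : F[X]),
        ((C a * h) * gPoly s y1) %ₘ gPoly s y2 = C a * ((h * gPoly s y1) %ₘ gPoly s y2)) ∧
    (∀ h h' : F[X], h.degree < (n - (s + 1) : ℕ) → h'.degree < (n - (s + 1) : ℕ) →
        (h * gPoly s y1) %ₘ gPoly s y2 = (h' * gPoly s y1) %ₘ gPoly s y2 → h = h') := by
  have hmonic := gPoly_monic (F := F) s y2
  refine ⟨?_, ?_, ?_, ?_⟩
  · intro h _
    have h1 := degree_modByMonic_lt (h * gPoly s y1) hmonic
    rw [gPoly_degree] at h1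
    exact withBot_le_of_lt_succ h1
  · intro h h'
    rw [add_mul, add_modByMonic]
  · intro a h
    rw [mul_assoc, ← smul_eq_C_mul, ← smul_eq_C_mul, smul_modByMonic]
  · intro h h' hd hd' heq
    have hcop : IsCoprime (gPoly s y2) (gPoly s y1) :=
      (isCoprime_X_sub_C_of_isUnit_sub
        ((sub_ne_zero_of_ne hy.symm).isUnit)).pow
    have hdvd : gPoly s y2 ∣ (h - h') * gPoly s y1 := by
      rw [← modByMonic_eq_zero_iff_dvd hmonic, sub_mul, sub_modByMonic, heq, sub_self]
    have hdvd2 : gPoly s y2 ∣ (h - h') := hcop.dvd_of_dvd_mul_right hdvd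
    by_contra hne
    have hsub : h - h' ≠ 0 := sub_ne_zero_of_ne hne
    have hdeg := degree_le_of_dvd hdvd2 hsub
    rw [gPoly_degree] at hdeg
    have hlt : (h - h').degree < ((n - (s+1) : ℕ) : WithBot ℕ) :=
      lt_of_le_of_lt (degree_sub_le _ _) (max_lt hd hd')
    have : ((s + 1 : ℕ) : WithBot ℕ) < ((s + 1 : ℕ) : WithBot ℕ) := by
      refine lt_of_le_of_lt hdeg (lt_of_lt_of_le hlt ?_)
      have hle : n - (s + 1) ≤ s + 1 := by omega
      exact_mod_cast hle
    exact lt_irrefl _ this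
end

section
/- (Two-sided lossless expander to lossless expander via the bipartite half) Let L and R be finite types, let E : L → R → Prop be a relation (the edge relation of a bipartite graph), let D_L, D_R, K_L, K_R be natural numbers and A_L, A_R be nonnegative real numbers. Assume: (a) every v ∈ L is related to exactly D_L elements of R; (b) every w ∈ R is related to exactly D_R elements of L; (c) for every finite set S ⊆ L with |S| ≤ K_L, the set Γ_L(S) := {w ∈ R : ∃ v ∈ S, E v w} satisfies |Γ_L(S)| ≥ A_L·|S|; (d) for every finite set T ⊆ R with |T| ≤ K_R, the set Γ_R(T) := {v ∈ L : ∃ w ∈ T, E v w} satisfies |Γ_R(T)| ≥ A_R·|T|; (e) D_L ≤ K_R. Then: (i) for every v ∈ L, the set Γ²(v) := {u ∈ L : ∃ w ∈ R, E v w and E u w} satisfies D_L·A_R ≤ |Γ²(v)| ≤ D_L·D_R; and (ii) for every finite set S ⊆ L with |S| ≤ K_L and D_L·|S| ≤ K_R, the set Γ²(S) := {u ∈ L : ∃ v ∈ S, ∃ w ∈ R, E v w and E u w} satisfies |Γ²(S)| ≥ A_L·A_R·|S|. -/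
/-!
Write `N(S)` for the neighbourhood of `S ⊆ L` in `R`. The two-step neighbourhood of `S` is the
neighbourhood of `N(S)` back in `L`, so the two expansion hypotheses compose: `|N(S)| ≤ D_L |S|`
is small enough for right expansion to apply, giving `|Γ²(S)| ≥ A_R |N(S)| ≥ A_R A_L |S|`.
For a single vertex `|N(v)| = D_L`, and `Γ²(v)` is covered by `D_L` sets of size `D_R`.
-/

lemma ncard_setOf_exists_rel_le {α β : Type*} [Finite β] (E : α → β → Prop) (D : ℕ)
    (hE : ∀ a, {b | E a b}.ncard ≤ D) {S : Set α} (hS : S.Finite) :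
    {b | ∃ a ∈ S, E a b}.ncard ≤ D * S.ncard := by
  have hcover : {b | ∃ a ∈ S, E a b} = ⋃ a ∈ hS.toFinset, {b | E a b} := by
    ext b
    simp
  calc {b | ∃ a ∈ S, E a b}.ncard
      ≤ ∑ a ∈ hS.toFinset, {b | E a b}.ncard := hcover ▸ Finset.set_ncard_biUnion_le _ _
    _ ≤ hS.toFinset.card • D := Finset.sum_le_card_nsmul _ _ _ fun a _ => hE a
    _ = D * S.ncard := by rw [smul_eq_mul, mul_comm, Set.ncard_eq_toFinset_card S hS]

lemma setOf_exists_two_step_eq {α β : Type*} (E : α → β → Prop) (S : Set α) :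
    {u | ∃ v ∈ S, ∃ w, E v w ∧ E u w} = {u | ∃ w ∈ {w | ∃ v ∈ S, E v w}, E u w} := by
  ext u
  simp only [Set.mem_ofPred_eq]
  tauto

theorem stmt_17_general {L R : Type*} [Fintype L] [Fintype R]
    (E : L → R → Prop) (DL DR KL KR : ℕ) (AL AR : ℝ) (hAR : 0 ≤ AR)
    (ha : ∀ v : L, Set.ncard {w : R | E v w} = DL)
    (hb : ∀ w : R, Set.ncard {v : L | E v w} = DR)
    (hc : ∀ S : Set L, S.ncard ≤ KL →
      AL * (S.ncard : ℝ) ≤ (Set.ncard {w : R | ∃ v ∈ S, E v w} : ℝ))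
    (hd : ∀ T : Set R, T.ncard ≤ KR →
      AR * (T.ncard : ℝ) ≤ (Set.ncard {v : L | ∃ w ∈ T, E v w} : ℝ))
    (he : DL ≤ KR) :
    (∀ v : L,
      (DL : ℝ) * AR ≤ (Set.ncard {u : L | ∃ w : R, E v w ∧ E u w} : ℝ) ∧
      Set.ncard {u : L | ∃ w : R, E v w ∧ E u w} ≤ DL * DR) ∧
    (∀ S : Set L, S.ncard ≤ KL → DL * S.ncard ≤ KR →
      AL * AR * (S.ncard : ℝ) ≤
        (Set.ncard {u : L | ∃ v ∈ S, ∃ w : R, E v w ∧ E u w} : ℝ)) := by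
  refine ⟨fun v => ⟨?_, ?_⟩, fun S hSL hSR => ?_⟩
  · have hexp := hd {w | E v w} (by rw [ha v]; exact he)
    rw [ha v, mul_comm] at hexp
    exact hexp
  · have hcover := ncard_setOf_exists_rel_le (fun w u => E u w) DR (fun w => (hb w).le)
      (Set.toFinite {w | E v w})
    rw [ha v, mul_comm] at hcover
    exact hcover
  · have hN : {w | ∃ v ∈ S, E v w}.ncard ≤ KR :=
      (ncard_setOf_exists_rel_le E DL (fun v => (ha v).le) S.toFinite).trans hSR
    rw [setOf_exists_two_step_eq]
    calc AL * AR * (S.ncard : ℝ) = AR * (AL * S.ncard) := by ring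
      _ ≤ AR * {w | ∃ v ∈ S, E v w}.ncard := mul_le_mul_of_nonneg_left (hc S hSL) hAR
      _ ≤ _ := hd _ hN

/-- The bipartite half of a two-sided lossless expander is a max-degree lossless
expander. -/
theorem stmt_17 {L R : Type*} [Fintype L] [Fintype R]
    (E : L → R → Prop) (DL DR KL KR : ℕ) (AL AR : ℝ) (hAL : 0 ≤ AL) (hAR : 0 ≤ AR)
    (ha : ∀ v : L, Set.ncard {w : R | E v w} = DL)
    (hb : ∀ w : R, Set.ncard {v : L | E v w} = DR)
    (hc : ∀ S : Set L, S.ncard ≤ KL →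
      AL * (S.ncard : ℝ) ≤ (Set.ncard {w : R | ∃ v ∈ S, E v w} : ℝ))
    (hd : ∀ T : Set R, T.ncard ≤ KR →
      AR * (T.ncard : ℝ) ≤ (Set.ncard {v : L | ∃ w ∈ T, E v w} : ℝ))
    (he : DL ≤ KR) :
    (∀ v : L,
      (DL : ℝ) * AR ≤ (Set.ncard {u : L | ∃ w : R, E v w ∧ E u w} : ℝ) ∧
      Set.ncard {u : L | ∃ w : R, E v w ∧ E u w} ≤ DL * DR) ∧
    (∀ S : Set L, S.ncard ≤ KL → DL * S.ncard ≤ KR →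
      AL * AR * (S.ncard : ℝ) ≤
        (Set.ncard {u : L | ∃ v ∈ S, ∃ w : R, E v w ∧ E u w} : ℝ)) :=
  stmt_17_general E DL DR KL KR AL AR hAR ha hb hc hd he
end
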